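/- arXiv:2208.14900 — 6 statements merged into one kernel-verified Lean document; each statement's English description precedes it below -/
import Mathlib

section
/- Let K be an algebraically closed field of characteristic zero, complete with respect to a nontrivial non-Archimedean absolute value, with ‖(n : K)‖ = 1 for every nonzero integer n. Let {(f_λ; c_1(λ),…,c_{d−1}(λ))} be a critically marked analytic family of monic centered degree-d polynomials (d ≥ 2) over the open ball Λ = {λ ∈ K : ‖λ − λ_0‖ < r}, and assume the base radius R_{f_λ} is the same for all λ ∈ Λ. Then there exists s_0 < r such that for every real s with s_0 < s < r that lies in the value group ‖K^×‖ there exists λ_1 ∈ K with ‖λ_1 − λ_0‖ = s such that the open ball Λ′ = {λ : ‖λ − λ_1‖ < s} (a maximal open disk contained in Λ ∖ {λ_0}) satisfies: (1) every marked critical point c_j is passive in Λ′; and (2) for every index j such that c_j is active in Λ, the point c_j(λ′) escapes to infinity under f_{λ′} for every λ′ ∈ Λ′. -/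
open Polynomial Filter

/-- The monic centered polynomial `z^d + a_{d-2} z^{d-2} + ⋯ + a_0`. -/
noncomputable def MCpoly {K : Type*} [Field K] (d : ℕ) (a : Fin (d - 1) → K) : Polynomial K :=
  X ^ d + ∑ i : Fin (d - 1), C (a i) * X ^ (i : ℕ)

/-- `z` escapes to infinity under `f`: `‖f^[n] z‖ → ∞`. -/
def Escapes {K : Type*} [NormedField K] (f : K → K) (z : K) : Prop :=
  Tendsto (fun n : ℕ => ‖f^[n] z‖) atTop atTop

/-- The polynomial map `f_λ` of a family with coefficient functions `a`. -/
noncomputable def famF {K : Type*} [Field K] (d : ℕ) (a : Fin (d - 1) → K → K)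
    (lam : K) : K → K :=
  fun z => (MCpoly d fun i => a i lam).eval z

/-- `h` is given by a power series centered at `lam0` converging at every point of the
open ball of radius `rad`. -/
def PowerSeriesOnBall {K : Type*} [NormedField K] (h : K → K) (lam0 : K) (rad : ℝ) :
    Prop :=
  ∃ b : ℕ → K, ∀ lam : K, ‖lam - lam0‖ < rad →
    HasSum (fun n : ℕ => b n * (lam - lam0) ^ n) (h lam)

/-- A critically marked analytic family of monic centered degree-`d` polynomials over the
open ball `{‖λ − lam0‖ < rad}`: the coefficients `a i` and marked critical points `c j`
are analytic, and `f_λ′(z) = d·(z − c_1(λ))⋯(z − c_{d−1}(λ))`. -/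
def IsMarkedFamily {K : Type*} [NormedField K] (d : ℕ) (lam0 : K) (rad : ℝ)
    (a c : Fin (d - 1) → K → K) : Prop :=
  (∀ i, PowerSeriesOnBall (a i) lam0 rad) ∧
  (∀ j, PowerSeriesOnBall (c j) lam0 rad) ∧
  (∀ lam : K, ‖lam - lam0‖ < rad →
    derivative (MCpoly d fun i => a i lam) =
      C (d : K) * ∏ j : Fin (d - 1), (X - C (c j lam)))

/-- The marked critical point `cj` is passive on the ball `{‖λ − lam0‖ < rad}`:
either it escapes for every parameter in the ball, or for none. -/
def PassiveOn {K : Type*} [NormedField K] (d : ℕ) (a : Fin (d - 1) → K → K)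
    (cj : K → K) (lam0 : K) (rad : ℝ) : Prop :=
  (∀ lam : K, ‖lam - lam0‖ < rad → Escapes (famF d a lam) (cj lam)) ∨
  (∀ lam : K, ‖lam - lam0‖ < rad → ¬ Escapes (famF d a lam) (cj lam))

/-- The base radius `R_f = max{1, ‖a_i‖^{1/(d−i)}}` of a monic centered polynomial. -/
noncomputable def baseRadius {K : Type*} [NormedField K] (d : ℕ) (a : Fin (d - 1) → K) :
    ℝ :=
  max 1 (⨆ i : Fin (d - 1), ‖a i‖ ^ (((d : ℝ) - ((i : ℕ) : ℝ))⁻¹))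

/-!
Write `g_{j,n}(λ) = f_λ^[n] (c_j λ)`; these are again power series on `Λ`. Since the base radius
`R` is constant on `Λ` and `f_λ` raises norms above `R` to the `d`-th power, `c_j(λ)` escapes iff
`‖g_{j,n}(λ)‖ > R` for some `n`.

If `c_j` is active, pick `λ_W`, `n` with `‖g_{j,n}(λ_W)‖ > R`; for `‖λ_W - λ₀‖ < s < r` the Gauss
norm `G` of `g_{j,n}` at radius `s` is then `> R`. On the open disk of radius `s` around a point
`λ₁` with `‖λ₁ - λ₀‖ = s` and `‖g_{j,n}(λ₁)‖ ≥ G` the norm of `g_{j,n}` is constant, so `c_j`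
escapes there. At the other such centres a truncation of `g_{j,n}` of Gauss norm `≥ G` has value
of norm `< G`; by Lagrange interpolation, among centres pairwise at distance `s` there are at
most as many of these as its degree. Since `‖m‖ = 1` for nonzero integers `m`, the centres
`λ₀ + (m + 1) x` with `‖x‖ = s` are pairwise at distance `s`; taking enough of them, one serves
all active `c_j` at once.
-/

open Finset Topology

local notation "‖" p "‖[" s "]" => Polynomial.gaussNorm (NormedField.toAbsoluteValue _) s p

namespace PowerSeriesOnBall

variable {K : Type*} [NormedField K] {lam0 : K} {r : ℝ}

theorem const (a : K) : PowerSeriesOnBall (fun _ => a) lam0 r :=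
  ⟨fun n => if n = 0 then a else 0, fun _ _ => by
    convert hasSum_ite_eq 0 a using 2 with n
    split_ifs with hn <;> simp [hn]⟩

theorem add {h₁ h₂ : K → K} (H₁ : PowerSeriesOnBall h₁ lam0 r)
    (H₂ : PowerSeriesOnBall h₂ lam0 r) :
    PowerSeriesOnBall (fun lam => h₁ lam + h₂ lam) lam0 r := by
  obtain ⟨b₁, hb₁⟩ := H₁
  obtain ⟨b₂, hb₂⟩ := H₂
  exact ⟨b₁ + b₂, fun lam hlam => by simpa [add_mul] using (hb₁ lam hlam).add (hb₂ lam hlam)⟩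

theorem sum {ι : Type*} (S : Finset ι) {h : ι → K → K}
    (H : ∀ i ∈ S, PowerSeriesOnBall (h i) lam0 r) :
    PowerSeriesOnBall (fun lam => ∑ i ∈ S, h i lam) lam0 r := by
  classical
  induction S using Finset.induction with
  | empty => simpa using const 0
  | insert i S hi ih =>
    simpa [sum_insert hi] using
      (H i (mem_insert_self i S)).add (ih fun j hj => H j (mem_insert_of_mem hj))

variable [IsUltrametricDist K]

theorem mul {h₁ h₂ : K → K} (H₁ : PowerSeriesOnBall h₁ lam0 r)
    (H₂ : PowerSeriesOnBall h₂ lam0 r) :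
    PowerSeriesOnBall (fun lam => h₁ lam * h₂ lam) lam0 r := by
  -- Only the additive `NonarchimedeanAddGroup` instance is inferred from `IsUltrametricDist`.
  have : NonarchimedeanRing K :=
    { is_nonarchimedean := NonarchimedeanAddGroup.is_nonarchimedean }
  obtain ⟨b₁, hb₁⟩ := H₁
  obtain ⟨b₂, hb₂⟩ := H₂
  refine ⟨fun n => ∑ kl ∈ antidiagonal n, b₁ kl.1 * b₂ kl.2, fun lam hlam => ?_⟩
  have h := (hb₁ lam hlam).mul_of_nonarchimedean (hb₂ lam hlam)
  rw [← HasAntidiagonal.sigmaAntidiagonalEquivProd.hasSum_iff] at h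
  convert h.sigma fun n => hasSum_fintype _ using 1
  ext n
  rw [sum_mul, ← sum_coe_sort]
  refine Fintype.sum_congr _ _ fun ⟨⟨k, l⟩, hkl⟩ => ?_
  obtain rfl := HasAntidiagonal.mem_antidiagonal.1 hkl
  simp [HasAntidiagonal.sigmaAntidiagonalEquivProd, pow_add]
  ring

theorem pow {h : K → K} (H : PowerSeriesOnBall h lam0 r) (n : ℕ) :
    PowerSeriesOnBall (fun lam => h lam ^ n) lam0 r := by
  induction n with
  | zero => simpa using const 1
  | succ n ih => simpa [pow_succ] using ih.mul H

theorem iterate_famF {d : ℕ} {a : Fin (d - 1) → K → K} {c : K → K}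
    (ha : ∀ i, PowerSeriesOnBall (a i) lam0 r) (hc : PowerSeriesOnBall c lam0 r) (n : ℕ) :
    PowerSeriesOnBall (fun lam => (famF d a lam)^[n] (c lam)) lam0 r := by
  induction n with
  | zero => exact hc
  | succ n ih =>
    simp only [Function.iterate_succ_apply', famF, MCpoly, eval_add, eval_pow, eval_X,
      eval_finsetSum, eval_mul, eval_C]
    exact (ih.pow d).add (sum _ fun i _ => (ha i).mul (ih.pow i))

end PowerSeriesOnBall

section Escape

variable {K : Type*} [NormedField K] {d : ℕ} {a : Fin (d - 1) → K}

theorem norm_le_baseRadius_pow (i : Fin (d - 1)) : ‖a i‖ ≤ baseRadius d a ^ (d - (i : ℕ)) := by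
  have hcast : ((d : ℝ) - ((i : ℕ) : ℝ)) = ((d - (i : ℕ) : ℕ) : ℝ) := by
    rw [Nat.cast_sub (by omega)]
  calc ‖a i‖ = (‖a i‖ ^ (((d : ℝ) - ((i : ℕ) : ℝ))⁻¹)) ^ (d - (i : ℕ)) := by
        rw [hcast, Real.rpow_inv_natCast_pow (norm_nonneg _) (by omega)]
    _ ≤ baseRadius d a ^ (d - (i : ℕ)) := by
        gcongr
        exact le_max_of_le_right <|
          le_ciSup (f := fun j : Fin (d - 1) => ‖a j‖ ^ (((d : ℝ) - ((j : ℕ) : ℝ))⁻¹))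
            (Set.finite_range _).bddAbove i

variable [IsUltrametricDist K]

theorem norm_eval_MCpoly (hd : 2 ≤ d) {z : K} (hz : baseRadius d a < ‖z‖) :
    ‖(MCpoly d a).eval z‖ = ‖z‖ ^ d := by
  have : Nonempty (Fin (d - 1)) := ⟨⟨0, by omega⟩⟩
  have hR : 0 ≤ baseRadius d a := zero_le_one.trans (le_max_left _ _)
  have hterm (i : Fin (d - 1)) : ‖a i * z ^ (i : ℕ)‖ < ‖z ^ d‖ := calc
    ‖a i * z ^ (i : ℕ)‖ ≤ baseRadius d a ^ (d - (i : ℕ)) * ‖z‖ ^ (i : ℕ) := by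
      rw [norm_mul, norm_pow]
      gcongr
      exact norm_le_baseRadius_pow i
    _ < ‖z‖ ^ (d - (i : ℕ)) * ‖z‖ ^ (i : ℕ) := by
      gcongr
      · exact pow_pos (hR.trans_lt hz) _
      · omega
    _ = ‖z ^ d‖ := by rw [← pow_add, norm_pow, Nat.sub_add_cancel (by omega)]
  obtain ⟨i, -, hi⟩ := IsUltrametricDist.exists_norm_finsetSum_le univ fun i => a i * z ^ (i : ℕ)
  simp only [MCpoly, eval_add, eval_pow, eval_X, eval_finsetSum, eval_mul, eval_C]
  rw [IsUltrametricDist.norm_add_eq_max_of_norm_ne_norm (hi.trans_lt (hterm i)).ne',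
    max_eq_left (hi.trans (hterm i).le), norm_pow]

theorem norm_iterate_eval_MCpoly (hd : 2 ≤ d) {z : K} (hz : baseRadius d a < ‖z‖) (n : ℕ) :
    ‖(fun w => (MCpoly d a).eval w)^[n] z‖ = ‖z‖ ^ d ^ n := by
  induction n with
  | zero => simp
  | succ n ih =>
    have hlarge : baseRadius d a < ‖(fun w => (MCpoly d a).eval w)^[n] z‖ := by
      rw [ih]
      exact hz.trans_le (le_self_pow₀ (le_max_left _ _ |>.trans hz.le) (by positivity))
    rw [Function.iterate_succ_apply', norm_eval_MCpoly hd hlarge, ih, ← pow_mul, ← pow_succ]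

theorem escapes_of_baseRadius_lt_norm_iterate (hd : 2 ≤ d) {z : K} {m : ℕ}
    (hz : baseRadius d a < ‖(fun w => (MCpoly d a).eval w)^[m] z‖) :
    Escapes (fun w => (MCpoly d a).eval w) z := by
  have hz1 : 1 < ‖(fun w => (MCpoly d a).eval w)^[m] z‖ := (le_max_left _ _).trans_lt hz
  refine (tendsto_add_atTop_iff_nat m).1 <| tendsto_atTop_mono (fun n => ?_)
    (tendsto_pow_atTop_atTop_of_one_lt hz1)
  rw [Function.iterate_add_apply, norm_iterate_eval_MCpoly hd hz]
  exact pow_le_pow_right₀ hz1.le (Nat.lt_pow_self (by omega)).le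

end Escape

theorem PassiveOn.mono {K : Type*} [NormedField K] {d : ℕ} {a : Fin (d - 1) → K → K}
    {cj : K → K} {lam0 lam1 : K} {r s : ℝ} (h : PassiveOn d a cj lam0 r)
    (hsub : ∀ lam, ‖lam - lam1‖ < s → ‖lam - lam0‖ < r) : PassiveOn d a cj lam1 s :=
  h.imp (fun h lam hlam => h lam (hsub lam hlam)) fun h lam hlam => h lam (hsub lam hlam)

theorem exists_baseRadius_lt_norm_iterate_of_not_passiveOn {K : Type*} [NormedField K] {d : ℕ}
    {a : Fin (d - 1) → K → K} {cj : K → K} {lam0 : K} {r : ℝ} (h : ¬ PassiveOn d a cj lam0 r) :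
    ∃ lamW, ‖lamW - lam0‖ < r ∧
      ∃ n, baseRadius d (fun i => a i lamW) < ‖(famF d a lamW)^[n] (cj lamW)‖ := by
  obtain ⟨lamW, hWr, hesc⟩ : ∃ lamW, ‖lamW - lam0‖ < r ∧ Escapes (famF d a lamW) (cj lamW) := by
    by_contra! hne
    exact h (Or.inr hne)
  exact ⟨lamW, hWr, (hesc.eventually_gt_atTop _).exists⟩

theorem exists_forall_le_of_tendsto_zero {t : ℕ → ℝ} (ht0 : ∀ k, 0 ≤ t k)
    (ht : Tendsto t atTop (𝓝 0)) : ∃ k₀, ∀ k, t k ≤ t k₀ := by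
  by_cases h : ∃ k₁, 0 < t k₁
  · obtain ⟨k₁, hk₁⟩ := h
    refine continuous_of_discreteTopology.exists_forall_ge' k₁ ?_
    rw [cocompact_eq_atTop]
    exact (ht.eventually_lt_const hk₁).mono fun _ => le_of_lt
  · push Not at h
    exact ⟨0, fun k => (h k).trans (ht0 0)⟩

section Ultrametric

variable {K : Type*} [NormedField K] [IsUltrametricDist K] {s G : ℝ}

theorem norm_le_of_norm_le_of_norm_sub_le {x y : K} (hx : ‖x‖ ≤ s) (hxy : ‖y - x‖ ≤ s) :
    ‖y‖ ≤ s := by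
  simpa using (IsUltrametricDist.norm_add_le_max (y - x) x).trans (max_le hxy hx)

section Series

variable {b : ℕ → K}

theorem norm_sub_sum_range_le_of_hasSum {w S : K} (hG : 0 ≤ G) (hw : ‖w‖ ≤ s) {M : ℕ}
    (hb : ∀ k, M ≤ k → ‖b k‖ * s ^ k ≤ G) (hS : HasSum (fun k => b k * w ^ k) S) :
    ‖S - ∑ k ∈ range M, b k * w ^ k‖ ≤ G := by
  rw [← ((hasSum_nat_add_iff' M).2 hS).tsum_eq]
  refine IsUltrametricDist.norm_tsum_le_of_forall_le_of_nonneg hG fun k => ?_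
  rw [norm_mul, norm_pow]
  exact (mul_le_mul_of_nonneg_left (pow_le_pow_left₀ (norm_nonneg _) hw _) (norm_nonneg _)).trans
    (hb _ (Nat.le_add_left _ _))

theorem norm_le_of_hasSum {w S : K} (hG : 0 ≤ G) (hw : ‖w‖ ≤ s) (hb : ∀ k, ‖b k‖ * s ^ k ≤ G)
    (hS : HasSum (fun k => b k * w ^ k) S) : ‖S‖ ≤ G := by
  simpa using norm_sub_sum_range_le_of_hasSum hG hw (M := 0) (fun k _ => hb k) hS

theorem norm_eval_trunc_lt {w S : K} {ε : ℝ} (hε : 0 ≤ ε) (hεG : ε < G) (hw : ‖w‖ ≤ s) {M : ℕ}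
    (hb : ∀ k, M ≤ k → ‖b k‖ * s ^ k ≤ ε) (hS : HasSum (fun k => b k * w ^ k) S)
    (hSG : ‖S‖ < G) : ‖(PowerSeries.trunc M (PowerSeries.mk b)).eval w‖ < G := by
  have htail := norm_sub_sum_range_le_of_hasSum hε hw hb hS
  rw [← eval₂_id, PowerSeries.eval₂_trunc_eq_sum_range]
  simp only [RingHom.id_apply, PowerSeries.coeff_mk]
  calc ‖∑ k ∈ range M, b k * w ^ k‖ = ‖S + (∑ k ∈ range M, b k * w ^ k - S)‖ := by
        rw [add_sub_cancel]
    _ ≤ max ‖S‖ ‖S - ∑ k ∈ range M, b k * w ^ k‖ := by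
        rw [norm_sub_rev S]
        exact IsUltrametricDist.norm_add_le_max _ _
    _ < G := max_lt hSG (htail.trans_lt hεG)

theorem norm_sub_le_of_hasSum (hs : 0 < s) {w₁ w₂ S₁ S₂ : K} (hw₁ : ‖w₁‖ ≤ s) (hw₂ : ‖w₂‖ ≤ s)
    (hG : 0 ≤ G) (hb : ∀ k, ‖b k‖ * s ^ k ≤ G) (hS₁ : HasSum (fun k => b k * w₁ ^ k) S₁)
    (hS₂ : HasSum (fun k => b k * w₂ ^ k) S₂) : ‖S₂ - S₁‖ ≤ G * (‖w₂ - w₁‖ / s) := by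
  rw [← (hS₂.sub hS₁).tsum_eq]
  refine IsUltrametricDist.norm_tsum_le_of_forall_le_of_nonneg (by positivity) fun k => ?_
  rcases k with _ | n
  · simpa using by positivity
  have hgeom : ‖∑ i ∈ range (n + 1), w₂ ^ i * w₁ ^ (n - i)‖ ≤ s ^ n := by
    refine IsUltrametricDist.norm_sum_le_of_forall_le_of_nonneg (by positivity) fun i hi => ?_
    rw [norm_mul, norm_pow, norm_pow]
    calc ‖w₂‖ ^ i * ‖w₁‖ ^ (n - i) ≤ s ^ i * s ^ (n - i) := by gcongr
      _ = s ^ n := by rw [← pow_add, Nat.add_sub_cancel' (Nat.lt_succ_iff.1 (mem_range.1 hi))]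
  calc ‖b (n + 1) * w₂ ^ (n + 1) - b (n + 1) * w₁ ^ (n + 1)‖
      = ‖b (n + 1)‖ * ‖∑ i ∈ range (n + 1), w₂ ^ i * w₁ ^ (n - i)‖ * ‖w₂ - w₁‖ := by
        rw [← mul_sub, ← geom_sum₂_mul, Nat.add_sub_cancel, norm_mul, norm_mul, mul_assoc]
    _ ≤ ‖b (n + 1)‖ * s ^ n * ‖w₂ - w₁‖ := by gcongr
    _ = ‖b (n + 1)‖ * s ^ (n + 1) * (‖w₂ - w₁‖ / s) := by field_simp; ring
    _ ≤ G * (‖w₂ - w₁‖ / s) := by gcongr; exact hb _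

theorem norm_eq_of_hasSum_of_le_norm (hs : 0 < s) {w₁ w₂ S₁ S₂ : K} (hw₁ : ‖w₁‖ ≤ s)
    (hw₂ : ‖w₂‖ ≤ s) (hw : ‖w₂ - w₁‖ < s) (hG : 0 < G) (hb : ∀ k, ‖b k‖ * s ^ k ≤ G)
    (hGS : G ≤ ‖S₁‖) (hS₁ : HasSum (fun k => b k * w₁ ^ k) S₁)
    (hS₂ : HasSum (fun k => b k * w₂ ^ k) S₂) : ‖S₂‖ = ‖S₁‖ := by
  have hlt : ‖S₂ - S₁‖ < ‖S₁‖ := calc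
    ‖S₂ - S₁‖ ≤ G * (‖w₂ - w₁‖ / s) := norm_sub_le_of_hasSum hs hw₁ hw₂ hG.le hb hS₁ hS₂
    _ < G := mul_lt_of_lt_one_right hG ((div_lt_one hs).2 hw)
    _ ≤ ‖S₁‖ := hGS
  simpa using (IsUltrametricDist.norm_add_eq_max_of_norm_ne_norm hlt.ne').trans
    (max_eq_left hlt.le)

end Series

section Interpolation

omit [IsUltrametricDist K] in
@[simp]
theorem NormedField.toAbsoluteValue_apply (x : K) : NormedField.toAbsoluteValue K x = ‖x‖ :=
  rfl

variable (K) in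
theorem isNonarchimedean_toAbsoluteValue : IsNonarchimedean (NormedField.toAbsoluteValue K) :=
  IsUltrametricDist.isNonarchimedean_norm

theorem gaussNorm_C_mul_le (hs : 0 ≤ s) (a : K) (p : K[X]) : ‖C a * p‖[s] ≤ ‖a‖ * ‖p‖[s] :=
  (gaussNorm_mul_le _ (isNonarchimedean_toAbsoluteValue K) _ _ hs).trans_eq
    (by rw [gaussNorm_C]; rfl)

theorem gaussNorm_X_sub_C_le (hs : 0 ≤ s) {z : K} (hz : ‖z‖ ≤ s) : ‖X - C z‖[s] ≤ s := by
  rw [show X - C z = X + C (-z) by simp [sub_eq_add_neg]]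
  refine (isNonarchimedean_gaussNorm _ (isNonarchimedean_toAbsoluteValue K) hs _ _).trans
    (max_le ?_ ?_)
  · rw [← monomial_one_one_eq_X, gaussNorm_monomial]
    simp
  · rw [gaussNorm_C, NormedField.toAbsoluteValue_apply, norm_neg]
    exact hz

theorem gaussNorm_basisDivisor_le_one (hs : 0 < s) {y z : K} (hz : ‖z‖ ≤ s)
    (hyz : ‖y - z‖ = s) : ‖Lagrange.basisDivisor y z‖[s] ≤ 1 :=
  calc ‖Lagrange.basisDivisor y z‖[s] ≤ ‖(y - z)⁻¹‖ * s :=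
        (gaussNorm_C_mul_le hs.le _ _).trans (by gcongr; exact gaussNorm_X_sub_C_le hs.le hz)
    _ = 1 := by rw [norm_inv, hyz, inv_mul_cancel₀ hs.ne']

theorem gaussNorm_basis_le_one [DecidableEq K] (hs : 0 < s) {T : Finset K}
    (hTs : ∀ y ∈ T, ‖y‖ ≤ s) (hT : ∀ y ∈ T, ∀ z ∈ T, y ≠ z → ‖y - z‖ = s) {y : K}
    (hy : y ∈ T) : ‖Lagrange.basis T id y‖[s] ≤ 1 := by
  refine prod_induction _ (fun p => ‖p‖[s] ≤ 1) (fun p q hp hq => ?_) ?_ fun z hz => ?_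
  · exact (gaussNorm_mul_le _ (isNonarchimedean_toAbsoluteValue K) _ _ hs.le).trans
      (mul_le_one₀ hp (gaussNorm_nonneg _ _ hs.le) hq)
  · rw [← C_1, gaussNorm_C]
    simp
  · obtain ⟨hzy, hzT⟩ := mem_erase.1 hz
    exact gaussNorm_basisDivisor_le_one hs (hTs z hzT) (hT y hy z hzT (Ne.symm hzy))

theorem exists_gaussNorm_le_norm_eval (hs : 0 < s) {T : Finset K} (hTne : T.Nonempty)
    (hTs : ∀ y ∈ T, ‖y‖ ≤ s) (hT : ∀ y ∈ T, ∀ z ∈ T, y ≠ z → ‖y - z‖ = s) {p : K[X]}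
    (hp : p.degree < #T) : ∃ y ∈ T, ‖p‖[s] ≤ ‖p.eval y‖ := by
  classical
  obtain ⟨y, hy, hle⟩ := (isNonarchimedean_gaussNorm _ (isNonarchimedean_toAbsoluteValue K)
    hs.le).finset_image_add_of_nonempty (fun z => C (p.eval z) * Lagrange.basis T id z) hTne
  refine ⟨y, hy, ?_⟩
  calc ‖p‖[s] = ‖∑ z ∈ T, C (p.eval z) * Lagrange.basis T id z‖[s] := by
        rw [← Lagrange.interpolate_apply]
        exact congrArg _ (Lagrange.eq_interpolate (Set.injOn_id _) hp)
    _ ≤ ‖C (p.eval y) * Lagrange.basis T id y‖[s] := hle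
    _ ≤ ‖p.eval y‖ * ‖Lagrange.basis T id y‖[s] := gaussNorm_C_mul_le hs.le _ _
    _ ≤ ‖p.eval y‖ :=
        mul_le_of_le_one_right (norm_nonneg _) (gaussNorm_basis_le_one hs hTs hT hy)

theorem card_le_natDegree_of_forall_norm_eval_lt (hs : 0 < s) {T : Finset K}
    (hTs : ∀ y ∈ T, ‖y‖ ≤ s) (hT : ∀ y ∈ T, ∀ z ∈ T, y ≠ z → ‖y - z‖ = s) {p : K[X]}
    (hG : G ≤ ‖p‖[s]) (hpT : ∀ y ∈ T, ‖p.eval y‖ < G) : #T ≤ p.natDegree := by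
  by_contra! hlt
  obtain ⟨y, hy, hle⟩ := exists_gaussNorm_le_norm_eval hs (card_pos.1 (by omega)) hTs hT
    (degree_le_natDegree.trans_lt (by exact_mod_cast hlt))
  exact (hpT y hy).not_ge (hG.trans hle)

end Interpolation

end Ultrametric

namespace PowerSeriesOnBall

variable {K : Type*} [NormedField K] [IsUltrametricDist K] {lam0 : K} {r : ℝ}

theorem exists_card_le_of_forall_exists_norm_le {h : K → K} (H : PowerSeriesOnBall h lam0 r)
    {R s : ℝ} (hR : 0 ≤ R) (hs : 0 < s) (hsr : s < r) {x : K} (hx : ‖x‖ = s) {lamW : K}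
    (hWs : ‖lamW - lam0‖ ≤ s) (hW : R < ‖h lamW‖) :
    ∃ N : ℕ, ∀ T : Finset K, (∀ y ∈ T, ‖y‖ ≤ s) → (∀ y ∈ T, ∀ z ∈ T, y ≠ z → ‖y - z‖ = s) →
      (∀ y ∈ T, ∃ lam, ‖lam - (lam0 + y)‖ < s ∧ ‖h lam‖ ≤ R) → #T ≤ N := by
  obtain ⟨b, hb⟩ := H
  have hsum (w : K) (hw : ‖w‖ ≤ s) : HasSum (fun k => b k * w ^ k) (h (lam0 + w)) := by
    simpa using hb (lam0 + w) (by simpa using hw.trans_lt hsr)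
  set ρ : ℕ → ℝ := fun k => ‖b k‖ * s ^ k
  have hρ : Tendsto ρ atTop (𝓝 0) := by
    simpa [ρ, hx] using (hsum x hx.le).summable.tendsto_atTop_zero.norm
  obtain ⟨k₀, hk₀⟩ := exists_forall_le_of_tendsto_zero (fun k => by positivity) hρ
  have hRG : R < ρ k₀ := hW.trans_le <| by
    simpa using norm_le_of_hasSum (by positivity) hWs hk₀ (hsum _ hWs)
  have hG : 0 < ρ k₀ := hR.trans_lt hRG
  obtain ⟨N, hN⟩ := eventually_atTop.1 (hρ.eventually (ge_mem_nhds (half_pos hG)))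
  set p := PowerSeries.trunc (max N k₀ + 1) (PowerSeries.mk b)
  have hGp : ρ k₀ ≤ ‖p‖[s] := by
    refine le_of_eq_of_le ?_ (le_gaussNorm _ p hs.le k₀)
    simp [p, PowerSeries.coeff_trunc, Nat.lt_succ_of_le (le_max_right N k₀), ρ]
  refine ⟨max N k₀, fun T hTs hT hbad => Nat.le_of_lt_succ <|
    (card_le_natDegree_of_forall_norm_eval_lt hs hTs hT hGp fun y hy => ?_).trans_lt
      (PowerSeries.natDegree_trunc_lt _ _)⟩
  obtain ⟨lam, hlam, hle⟩ := hbad y hy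
  have hys : ‖y‖ ≤ s := hTs y hy
  have hlam' : ‖(lam - lam0) - y‖ < s := by rwa [sub_sub]
  have hlam0 : ‖lam - lam0‖ ≤ s := norm_le_of_norm_le_of_norm_sub_le hys hlam'.le
  refine norm_eval_trunc_lt (half_pos hG).le (half_lt_self hG) hys
    (fun k hk => hN k (by omega)) (hsum y hys) ?_
  by_contra! hbig
  have := norm_eq_of_hasSum_of_le_norm hs hys hlam0 hlam' hG hk₀ hbig (hsum y hys)
    (by simpa using hsum (lam - lam0) hlam0)
  linarith

end PowerSeriesOnBall

theorem exists_finset_norm_eq_norm_sub_eq {K : Type*} [NormedField K]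
    (hres : ∀ n : ℤ, n ≠ 0 → ‖(n : K)‖ = 1) {x : K} (hx : x ≠ 0) (M : ℕ) :
    ∃ T : Finset K, #T = M ∧ (∀ y ∈ T, ‖y‖ = ‖x‖) ∧
      ∀ y ∈ T, ∀ z ∈ T, y ≠ z → ‖y - z‖ = ‖x‖ := by
  classical
  have hnorm (n : ℤ) (hn : n ≠ 0) : ‖(n : K) * x‖ = ‖x‖ := by rw [norm_mul, hres n hn, one_mul]
  have hsep (m m' : ℕ) (h : m ≠ m') :
      ‖((m + 1 : ℤ) : K) * x - ((m' + 1 : ℤ) : K) * x‖ = ‖x‖ := by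
    rw [← sub_mul, ← Int.cast_sub]
    exact hnorm _ (by omega)
  refine ⟨(range M).image fun m : ℕ => ((m + 1 : ℤ) : K) * x, ?_, ?_, ?_⟩
  · refine (card_image_of_injective _ fun m m' hmm' => ?_).trans (card_range M)
    by_contra h
    have h0 := hsep m m' h
    beta_reduce at hmm'
    rw [hmm', sub_self, norm_zero] at h0
    exact hx (norm_eq_zero.1 h0.symm)
  · simp only [mem_image]
    rintro _ ⟨m, -, rfl⟩
    exact hnorm _ (by omega)
  · simp only [mem_image]
    rintro _ ⟨m, -, rfl⟩ _ ⟨m', -, rfl⟩ hne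
    exact hsep m m' fun h => hne (h ▸ rfl)

theorem PowerSeriesOnBall.exists_disk_forall_lt_norm {K : Type*} [NormedField K]
    [IsUltrametricDist K] (hres : ∀ n : ℤ, n ≠ 0 → ‖(n : K)‖ = 1) {lam0 : K} {r : ℝ}
    {ι : Type*} [Fintype ι] {h : ι → K → K} (H : ∀ i, PowerSeriesOnBall (h i) lam0 r)
    {R : ι → ℝ} (hR : ∀ i, 0 ≤ R i) {lamW : ι → K} (hWr : ∀ i, ‖lamW i - lam0‖ < r)
    (hW : ∀ i, R i < ‖h i (lamW i)‖) :
    ∃ s0 < r, ∀ s, s0 < s → s < r → (∃ x : K, x ≠ 0 ∧ ‖x‖ = s) →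
      ∃ lam1, ‖lam1 - lam0‖ = s ∧ ∀ i lam, ‖lam - lam1‖ < s → R i < ‖h i lam‖ := by
  classical
  obtain ⟨s0, hs0r, hs0⟩ := mem_nhdsLT_iff_exists_Ioo_subset.1 <|
    eventually_all.2 fun i => Ioo_mem_nhdsLT (hWr i)
  refine ⟨s0, hs0r, fun s hs0s hsr ⟨x, hx0, hxs⟩ => ?_⟩
  have hs : 0 < s := hxs ▸ norm_pos_iff.2 hx0
  choose N hN using fun i => (H i).exists_card_le_of_forall_exists_norm_le (hR i) hs hsr hxs
    (hs0 ⟨hs0s, hsr⟩ i).1.le (hW i)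
  obtain ⟨T, hTcard, hTs, hT⟩ := exists_finset_norm_eq_norm_sub_eq hres hx0 (∑ i, N i + 1)
  rw [hxs] at hTs hT
  set bad : ι → Finset K := fun i => {y ∈ T | ∃ lam, ‖lam - (lam0 + y)‖ < s ∧ ‖h i lam‖ ≤ R i}
  obtain ⟨y, hyT, hy⟩ := exists_mem_notMem_of_card_lt_card (s := univ.biUnion bad) <| calc
    #(univ.biUnion bad) ≤ ∑ i, #(bad i) := card_biUnion_le
    _ ≤ ∑ i, N i := sum_le_sum fun i _ => hN i _ (fun y hy => (hTs y (mem_filter.1 hy).1).le)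
        (fun y hy z hz => hT y (mem_filter.1 hy).1 z (mem_filter.1 hz).1)
        fun y hy => (mem_filter.1 hy).2
    _ < #T := by omega
  refine ⟨lam0 + y, by simpa using hTs y hyT, fun i lam hlam => ?_⟩
  by_contra! hle
  exact hy (mem_biUnion.2 ⟨i, mem_univ i, mem_filter.2 ⟨hyT, lam, hlam, hle⟩⟩)

theorem perturb_into_passive_disk_general
    {K : Type*} [NontriviallyNormedField K] [IsUltrametricDist K]
    (hres : ∀ n : ℤ, n ≠ 0 → ‖(n : K)‖ = 1)
    (d : ℕ) (hd : 2 ≤ d) (lam0 : K) (r : ℝ)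
    (a c : Fin (d - 1) → K → K)
    (hfam : IsMarkedFamily d lam0 r a c)
    (hbase : ∀ lam1 : K, ‖lam1 - lam0‖ < r → ∀ lam2 : K, ‖lam2 - lam0‖ < r →
      baseRadius d (fun i => a i lam1) = baseRadius d (fun i => a i lam2)) :
    ∃ s0 : ℝ, s0 < r ∧ ∀ s : ℝ, s0 < s → s < r → (∃ x : K, x ≠ 0 ∧ ‖x‖ = s) →
      ∃ lam1 : K, ‖lam1 - lam0‖ = s ∧
        (∀ j : Fin (d - 1), PassiveOn d a (c j) lam1 s) ∧
        (∀ j : Fin (d - 1), ¬ PassiveOn d a (c j) lam0 r →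
          ∀ lam' : K, ‖lam' - lam1‖ < s → Escapes (famF d a lam') (c j lam')) := by
  classical
  obtain ⟨ha, hc, -⟩ := hfam
  choose lamW hWr n hn using fun j : {j // ¬ PassiveOn d a (c j) lam0 r} =>
    exists_baseRadius_lt_norm_iterate_of_not_passiveOn j.2
  obtain ⟨s0, hs0r, hs0⟩ := PowerSeriesOnBall.exists_disk_forall_lt_norm hres
    (fun j => PowerSeriesOnBall.iterate_famF ha (hc j.1) (n j))
    (fun _ => zero_le_one.trans (le_max_left _ _)) hWr hn
  refine ⟨s0, hs0r, fun s hs0s hsr hx => ?_⟩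
  obtain ⟨lam1, hlam1, hlarge⟩ := hs0 s hs0s hsr hx
  have hdisk (lam : K) (hlam : ‖lam - lam1‖ < s) : ‖lam - lam0‖ < r := by
    refine (norm_le_of_norm_le_of_norm_sub_le hlam1.le ?_).trans_lt hsr
    rw [sub_sub_sub_cancel_right]
    exact hlam.le
  have hesc (j : Fin (d - 1)) (hj : ¬ PassiveOn d a (c j) lam0 r) (lam : K)
      (hlam : ‖lam - lam1‖ < s) : Escapes (famF d a lam) (c j lam) := by
    refine escapes_of_baseRadius_lt_norm_iterate hd (m := n ⟨j, hj⟩) ?_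
    rw [hbase lam (hdisk lam hlam) _ (hWr ⟨j, hj⟩)]
    exact hlarge ⟨j, hj⟩ lam hlam
  refine ⟨lam1, hlam1, fun j => ?_, hesc⟩
  by_cases hj : PassiveOn d a (c j) lam0 r
  · exact hj.mono hdisk
  · exact Or.inl (hesc j hj)

/-- Lemma 5.3: for a critically marked analytic family with constant base
radius over `Λ = {‖λ − λ₀‖ < r}`, for every radius `s < r` close enough to `r` and lying
in the value group, there is a maximal open disk `Λ′ = {‖λ − λ₁‖ < s}` in `Λ ∖ {λ₀}` on
which all marked critical points are passive and on which every critical point that is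
active in `Λ` escapes to infinity. -/
theorem perturb_into_passive_disk
    {K : Type*} [NontriviallyNormedField K] [IsUltrametricDist K]
    [CompleteSpace K] [IsAlgClosed K] [CharZero K]
    (hres : ∀ n : ℤ, n ≠ 0 → ‖(n : K)‖ = 1)
    (d : ℕ) (hd : 2 ≤ d) (lam0 : K) (r : ℝ) (hr : 0 < r)
    (a c : Fin (d - 1) → K → K)
    (hfam : IsMarkedFamily d lam0 r a c)
    (hbase : ∀ lam1 : K, ‖lam1 - lam0‖ < r → ∀ lam2 : K, ‖lam2 - lam0‖ < r →
      baseRadius d (fun i => a i lam1) = baseRadius d (fun i => a i lam2)) :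
    ∃ s0 : ℝ, s0 < r ∧ ∀ s : ℝ, s0 < s → s < r → (∃ x : K, x ≠ 0 ∧ ‖x‖ = s) →
      ∃ lam1 : K, ‖lam1 - lam0‖ = s ∧
        (∀ j : Fin (d - 1), PassiveOn d a (c j) lam1 s) ∧
        (∀ j : Fin (d - 1), ¬ PassiveOn d a (c j) lam0 r →
          ∀ lam' : K, ‖lam' - lam1‖ < s → Escapes (famF d a lam') (c j lam')) :=
  perturb_into_passive_disk_general hres d hd lam0 r a c hfam hbase
end

section
/- Let K be an algebraically closed field of characteristic zero equipped with a nontrivial non-Archimedean absolute value ‖·‖ such that ‖(n : K)‖ = 1 for every nonzero integer n. Let f ∈ K[X] be a nonconstant polynomial, let a ∈ K, r ≥ 0 a real number, and let w ∈ K be such that f(z_0) = w for some z_0 ∈ K with ‖z_0 − a‖ ≤ r. Then the number of roots of f(X) − w lying in the closed ball {ζ ∈ K : ‖ζ − a‖ ≤ r}, counted with multiplicity, equals 1 + Σ_c m_c, where the sum ranges over the roots c of f′ with ‖c − a‖ ≤ r and m_c denotes the multiplicity of c as a root of f′. (This is the classical formulation of the Riemann–Hurwitz formula deg_x f − 1 =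 Σ_{z ∈ \bar D_x ∩ Crit(f)} (deg_z f − 1) for tame polynomials.) -/
open Polynomial

private lemma ultra_sub_le' {K : Type*} [NormedField K] [IsUltrametricDist K] (a b : K) :
    ‖a - b‖ ≤ max ‖a‖ ‖b‖ := by
  rw [sub_eq_add_neg]
  simpa using IsUltrametricDist.norm_add_le_max a (-b)

private lemma ultra_sub_eq' {K : Type*} [NormedField K] [IsUltrametricDist K] {a b : K}
    (h : ‖b‖ < ‖a‖) : ‖a - b‖ = ‖a‖ := by
  rw [sub_eq_add_neg, IsUltrametricDist.norm_add_eq_max_of_norm_ne_norm (by simpa using h.ne')]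
  simp [h.le]

/-- Newton polygon root counting: for `g = c ∏ (X - z)` over an ultrametric field,
the index `k` = number of roots in the closed ball of radius `r > 0` around `0`
is the largest index maximizing `‖g_i‖ r^i`. -/
private lemma newton_count {K : Type*} [NormedField K] [IsUltrametricDist K]
    {r : ℝ} (hr : 0 < r) (s : Multiset K) :
    ∀ (c : K), c ≠ 0 → ∀ (g : Polynomial K),
      g = C c * (s.map (fun z => X - C z)).prod →
      ∀ (k : ℕ), k = Multiset.card (s.filter (fun z => ‖z‖ ≤ r)) →
      (∀ i, ‖g.coeff i‖ * r ^ i ≤ ‖g.coeff k‖ * r ^ k) ∧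
      (∀ i, k < i → ‖g.coeff i‖ * r ^ i < ‖g.coeff k‖ * r ^ k) ∧
      0 < ‖g.coeff k‖ := by
  have hrp : ∀ i : ℕ, (0:ℝ) < r ^ i := fun i => pow_pos hr i
  induction s using Multiset.induction with
  | empty =>
    intro c hc g hg k hk
    rw [Multiset.map_zero, Multiset.prod_zero, mul_one] at hg
    rw [Multiset.filter_zero, Multiset.card_zero] at hk
    subst hg; subst hk
    have hc0 : (C c).coeff 0 = c := coeff_C_zero
    refine ⟨?_, ?_, by simpa [hc0] using hc⟩
    · intro i
      rcases i with _ | n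
      · exact le_refl _
      · rw [coeff_C]
        simp only [Nat.succ_ne_zero, if_false, norm_zero, zero_mul, hc0, pow_zero, mul_one]
        positivity
    · intro i hi
      rcases i with _ | n
      · omega
      · rw [coeff_C]
        simp only [Nat.succ_ne_zero, if_false, norm_zero, zero_mul, hc0, pow_zero, mul_one]
        exact norm_pos_iff.mpr hc
  | cons z t IH =>
    intro c hc g hg k hk
    obtain ⟨H1, H2, H3⟩ := IH c hc (C c * (t.map fun w => X - C w).prod) rfl
        (Multiset.card (t.filter fun z : K => ‖z‖ ≤ r)) rfl
    set g' := C c * (t.map fun w => X - C w).prod with hg'def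
    set k' := Multiset.card (t.filter fun z : K => ‖z‖ ≤ r) with hk'def
    have hgg' : g = g' * (X - C z) := by
      rw [hg, hg'def, Multiset.map_cons, Multiset.prod_cons]; ring
    have hc1 : ∀ i, g.coeff (i+1) = g'.coeff i - g'.coeff (i+1) * z := by
      intro i; rw [hgg', coeff_mul_X_sub_C]
    have hc0 : ‖g.coeff 0‖ = ‖g'.coeff 0‖ * ‖z‖ := by
      rw [hgg', mul_coeff_zero]
      simp [norm_mul]
    have hM : 0 < ‖g'.coeff k'‖ * r ^ k' := mul_pos H3 (hrp k')
    -- general upper bound on coefficients of the product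
    have hub : ∀ i, ‖g.coeff (i+1)‖ * r ^ (i+1) ≤
        max (‖g'.coeff i‖ * r ^ i * r) (‖z‖ * (‖g'.coeff (i+1)‖ * r ^ (i+1))) := by
      intro i
      have h1 : ‖g.coeff (i+1)‖ ≤ max ‖g'.coeff i‖ (‖g'.coeff (i+1)‖ * ‖z‖) := by
        rw [hc1 i]
        exact (ultra_sub_le' _ _).trans (by rw [norm_mul])
      calc ‖g.coeff (i+1)‖ * r ^ (i+1)
          ≤ max ‖g'.coeff i‖ (‖g'.coeff (i+1)‖ * ‖z‖) * r ^ (i+1) :=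
            mul_le_mul_of_nonneg_right h1 (hrp _).le
        _ = max (‖g'.coeff i‖ * r ^ i * r) (‖z‖ * (‖g'.coeff (i+1)‖ * r ^ (i+1))) := by
            rw [max_mul_of_nonneg _ _ (hrp (i+1)).le]
            rw [pow_succ]
            congr 1 <;> ring
    by_cases hz : ‖z‖ ≤ r
    · -- root z inside the ball
      have hkk : k = k' + 1 := by
        rw [hk, hk'def]
        rw [Multiset.filter_cons]
        simp [hz]
      subst hkk
      -- key value at index k'+1
      have hvk : ‖g.coeff (k'+1)‖ * r ^ (k'+1) = ‖g'.coeff k'‖ * r ^ k' * r := by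
        have h2 := H2 (k'+1) (Nat.lt_succ_self _)
        rw [pow_succ] at h2
        have hlt : ‖g'.coeff (k'+1) * z‖ < ‖g'.coeff k'‖ := by
          rw [norm_mul]
          have step : ‖g'.coeff (k'+1)‖ * ‖z‖ * r ^ k' ≤ ‖g'.coeff (k'+1)‖ * (r ^ k' * r) := by
            nlinarith [mul_nonneg (norm_nonneg (g'.coeff (k'+1))) (hrp k').le, hz]
          exact lt_of_mul_lt_mul_right (step.trans_lt h2) (hrp k').le
        have heq : ‖g.coeff (k'+1)‖ = ‖g'.coeff k'‖ := by
          rw [hc1 k']; exact ultra_sub_eq' hlt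
        rw [heq, pow_succ]; ring
      have hpos : 0 < ‖g.coeff (k'+1)‖ := by
        have h : 0 < ‖g.coeff (k'+1)‖ * r ^ (k'+1) := by
          rw [hvk]; exact mul_pos hM hr
        nlinarith [hrp (k'+1), norm_nonneg (g.coeff (k'+1))]
      refine ⟨?_, ?_, hpos⟩
      · intro i
        rcases i with _ | j
        · rw [hvk, pow_zero, mul_one, hc0]
          have h10 : ‖g'.coeff 0‖ ≤ ‖g'.coeff k'‖ * r ^ k' := by simpa using H1 0
          nlinarith [norm_nonneg (g'.coeff 0), norm_nonneg z, hM.le]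
        · rw [hvk]
          refine (hub j).trans (max_le ?_ ?_)
          · exact mul_le_mul_of_nonneg_right (H1 j) hr.le
          · have hu := H1 (j+1)
            nlinarith [mul_nonneg (norm_nonneg (g'.coeff (j+1))) (hrp (j+1)).le,
              norm_nonneg z, hM.le]
      · intro i hi
        rcases i with _ | j
        · omega
        · have hj : k' < j := by omega
          rw [hvk]
          refine (hub j).trans_lt (max_lt ?_ ?_)
          · exact mul_lt_mul_of_pos_right (H2 j hj) hr
          · have hu := H2 (j+1) (by omega)
            nlinarith [mul_nonneg (norm_nonneg (g'.coeff (j+1))) (hrp (j+1)).le,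
              norm_nonneg z, hM]
    · -- root z outside the ball
      push_neg at hz
      have hzpos : (0:ℝ) < ‖z‖ := hr.trans hz
      have hkk : k = k' := by
        rw [hk, hk'def]
        rw [Multiset.filter_cons]
        simp [not_le.mpr hz]
      subst hkk
      have hvk : ‖g.coeff k'‖ * r ^ k' = ‖z‖ * (‖g'.coeff k'‖ * r ^ k') := by
        rcases k' with _ | j
        · rw [pow_zero, mul_one, mul_one, hc0]; ring
        · have hlt : ‖g'.coeff j‖ < ‖g'.coeff (j+1) * z‖ := by
            rw [norm_mul]
            have h1 := H1 j
            rw [pow_succ] at h1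
            -- ‖g'_j‖ * r^j ≤ ‖g'_{j+1}‖ * (r^j * r)
            have step : ‖g'.coeff j‖ * r ^ j < ‖g'.coeff (j+1)‖ * ‖z‖ * r ^ j := by
              nlinarith [mul_pos H3 (hrp j), hz, h1]
            exact lt_of_mul_lt_mul_right step (hrp j).le
          have heq : ‖g.coeff (j+1)‖ = ‖g'.coeff (j+1) * z‖ := by
            rw [hc1 j, norm_sub_rev]
            exact ultra_sub_eq' hlt
          rw [heq, norm_mul]; ring
      have hpos : 0 < ‖g.coeff k'‖ := by
        have h : 0 < ‖g.coeff k'‖ * r ^ k' := by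
          rw [hvk]; exact mul_pos hzpos hM
        nlinarith [hrp k', norm_nonneg (g.coeff k')]
      refine ⟨?_, ?_, hpos⟩
      · intro i
        rcases i with _ | j
        · rw [hvk, pow_zero, mul_one, hc0]
          have h10 : ‖g'.coeff 0‖ ≤ ‖g'.coeff k'‖ * r ^ k' := by simpa using H1 0
          nlinarith [norm_nonneg (g'.coeff 0), norm_nonneg z, hM.le]
        · rw [hvk]
          refine (hub j).trans (max_le ?_ ?_)
          · have h1 := H1 j
            nlinarith [hM.le, norm_nonneg (g'.coeff j), hr.le,
              mul_nonneg (norm_nonneg (g'.coeff j)) (hrp j).le]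
          · exact mul_le_mul_of_nonneg_left (H1 (j+1)) (norm_nonneg z)
      · intro i hi
        rcases i with _ | j
        · omega
        · have hj : k' ≤ j := by omega
          rw [hvk]
          refine (hub j).trans_lt (max_lt ?_ ?_)
          · have h1 := H1 j
            nlinarith [hM, norm_nonneg (g'.coeff j), hr.le,
              mul_nonneg (norm_nonneg (g'.coeff j)) (hrp j).le]
          · exact mul_lt_mul_of_pos_left (H2 (j+1) (by omega)) hzpos

private lemma taylor_rep {K : Type*} [Field K] [IsAlgClosed K] (a : K)
    (p : Polynomial K) (_hp : p ≠ 0) :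
    (taylor a) p =
      C p.leadingCoeff * ((p.roots.map (fun z => z - a)).map (fun y => X - C y)).prod := by
  have hsplit : Multiset.card p.roots = p.natDegree :=
    (splits_iff_card_roots).mp (IsAlgClosed.splits p)
  conv_lhs => rw [← C_leadingCoeff_mul_prod_multiset_X_sub_C hsplit]
  rw [taylor_mul, taylor_C]
  congr 1
  have : (taylor a) (p.roots.map fun z => X - C z).prod
      = ((p.roots.map fun z => X - C z).map (taylorAlgHom a)).prod :=
    map_multiset_prod (taylorAlgHom a) _
  rw [this, Multiset.map_map, Multiset.map_map]
  congr 1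
  refine Multiset.map_congr rfl ?_
  intro z _
  show (taylorAlgHom a) (X - C z) = X - C (z - a)
  rw [map_sub]
  simp only [taylorAlgHom_apply, taylor_X, taylor_C, C_sub]
  ring

/-- Riemann–Hurwitz formula for tame polynomials, classical formulation:
over an algebraically closed field of residue characteristic zero, for a nonconstant
polynomial `f`, if the value `w` is attained by `f` on the closed ball `‖ζ − a‖ ≤ r`, then
the number of solutions of `f(ζ) = w` in that ball, counted with multiplicity, equals
`1 + Σ_c m_c`, summing the multiplicities of the critical points `c` of `f` in the ball. -/
theorem riemann_hurwitz_ball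
    {K : Type*} [NontriviallyNormedField K] [IsUltrametricDist K]
    [IsAlgClosed K] [CharZero K]
    (hres : ∀ n : ℤ, n ≠ 0 → ‖(n : K)‖ = 1)
    (f : Polynomial K) (hf : 1 ≤ f.natDegree)
    (a : K) (r : ℝ) (hr : 0 ≤ r) (w : K)
    (hw : ∃ z0 : K, ‖z0 - a‖ ≤ r ∧ f.eval z0 = w) :
    Multiset.card (Multiset.filter (fun ζ : K => ‖ζ - a‖ ≤ r) ((f - C w).roots)) =
      1 + Multiset.card
        (Multiset.filter (fun c : K => ‖c - a‖ ≤ r) ((derivative f).roots)) := by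
  classical
  have hg0 : f - C w ≠ 0 := by
    intro h
    have : (f - C w).natDegree = f.natDegree := natDegree_sub_C
    rw [h, natDegree_zero] at this
    omega
  obtain ⟨z0, hz0r, hz0⟩ := hw
  have hroot : (f - C w).IsRoot z0 := by simp [IsRoot, hz0]
  rcases hr.eq_or_lt with hr0 | hrpos
  · -- r = 0
    subst hr0
    have hz0a : z0 = a := by rwa [norm_le_zero_iff, sub_eq_zero] at hz0r
    have hroota : (f - C w).IsRoot a := hz0a ▸ hroot
    have hfilter : ∀ (m : Multiset K),
        m.filter (fun ζ => ‖ζ - a‖ ≤ (0:ℝ)) = m.filter (fun ζ => a = ζ) := by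
      intro m
      refine Multiset.filter_congr ?_
      intro x _
      rw [norm_le_zero_iff, sub_eq_zero, eq_comm]
    have hcnt : ∀ (p : Polynomial K),
        Multiset.card (p.roots.filter fun ζ => a = ζ) = rootMultiplicity a p := by
      intro p
      rw [← Multiset.count_eq_card_filter_eq, count_roots]
    have hdd : derivative (f - C w) = derivative f := by simp
    have e3 : rootMultiplicity a (derivative f) = rootMultiplicity a (f - C w) - 1 := by
      rw [← hdd]
      exact derivative_rootMultiplicity_of_root hroota
    have e4 : 1 ≤ rootMultiplicity a (f - C w) := (rootMultiplicity_pos hg0).mpr hroota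
    rw [hfilter, hfilter, hcnt, hcnt, e3]
    omega
  · -- r > 0
    have hd0 : derivative f ≠ 0 := by
      intro h
      have := natDegree_eq_zero_of_derivative_eq_zero h
      omega
    obtain ⟨HgA, HgB, HgC⟩ := newton_count hrpos ((f - C w).roots.map (fun z => z - a))
        (f - C w).leadingCoeff (leadingCoeff_ne_zero.mpr hg0) ((taylor a) (f - C w))
        (taylor_rep a _ hg0) _ rfl
    obtain ⟨HdA, HdB, HdC⟩ := newton_count hrpos ((derivative f).roots.map (fun z => z - a))
        (derivative f).leadingCoeff (leadingCoeff_ne_zero.mpr hd0) ((taylor a) (derivative f))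
        (taylor_rep a _ hd0) _ rfl
    set G := (taylor a) (f - C w) with hG
    set G' := (taylor a) (derivative f) with hG'
    set N := Multiset.card (((f - C w).roots.map fun z => z - a).filter fun z => ‖z‖ ≤ r) with hN
    set M := Multiset.card (((derivative f).roots.map fun z => z - a).filter fun z => ‖z‖ ≤ r)
      with hM
    -- derivative link
    have hder : derivative G = G' := by
      rw [hG, hG', taylor_apply, taylor_apply, derivative_comp]
      simp
    have hlink : ∀ i : ℕ, ‖G'.coeff i‖ * r ^ i * r = ‖G.coeff (i+1)‖ * r ^ (i+1) := by
      intro i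
      have h1 : G'.coeff i = G.coeff (i+1) * ((i : K) + 1) := by
        rw [← hder, coeff_derivative]
      have h2 : ‖((i : K) + 1)‖ = 1 := by
        have := hres ((i : ℤ) + 1) (by omega)
        push_cast at this
        exact this
      rw [h1, norm_mul, h2, mul_one, pow_succ]
      ring
    -- N ≥ 1
    have hz0root : z0 ∈ (f - C w).roots := by
      rw [mem_roots hg0]
      exact hroot
    have hmem : z0 - a ∈ ((f - C w).roots.map fun z => z - a).filter fun z => ‖z‖ ≤ r := by
      rw [Multiset.mem_filter]
      exact ⟨Multiset.mem_map_of_mem _ hz0root, hz0r⟩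
    have hN1 : 1 ≤ N := by
      rw [hN]
      exact Multiset.card_pos.mpr fun h => by simp [h] at hmem
    obtain ⟨N', hNval⟩ : ∃ N', N = N' + 1 := ⟨N - 1, by omega⟩
    have hMN : M = N' := by
      rcases lt_trichotomy M N' with h | h | h
      · exfalso
        have h1 := HdB N' h
        have h2 := HgA (M + 1)
        rw [hNval] at h2
        rw [← hlink M, ← hlink N'] at h2
        nlinarith
      · exact h
      · exfalso
        have h1 := HgB (M + 1) (by omega)
        have h2 := HdA N'
        rw [hNval] at h1
        rw [← hlink M, ← hlink N'] at h1
        nlinarith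
    have hcount : ∀ (m : Multiset K),
        Multiset.card ((m.map fun z => z - a).filter fun z => ‖z‖ ≤ r)
          = Multiset.card (m.filter fun ζ => ‖ζ - a‖ ≤ r) := by
      intro m
      rw [Multiset.filter_map, Multiset.card_map]
      rfl
    rw [← hcount ((f - C w).roots), ← hcount ((derivative f).roots), ← hN, ← hM, hNval, hMN]
    omega
end

section
/- Let K be a field equipped with a non-Archimedean absolute value ‖·‖. Let d ≥ 1 and let f ∈ K[X] have degree at most d with all coefficients of norm at most 1. Let r ≥ 1 be a real number and let z, w ∈ K with ‖z‖ ≤ r and ‖w‖ ≤ 1. Then ‖f(z + w) − f(z) − f′(z)·w‖ ≤ r^d · ‖w‖². -/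
open Polynomial

lemma eval_norm_le_aux
    {K : Type*} [NormedField K] [IsUltrametricDist K]
    (d : ℕ) (p : Polynomial K)
    (hdeg : p.natDegree ≤ d) (hcoeff : ∀ n : ℕ, ‖p.coeff n‖ ≤ 1)
    (r : ℝ) (hr : 1 ≤ r) (z : K) (hz : ‖z‖ ≤ r) :
    ‖p.eval z‖ ≤ r ^ d := by
  rw [Polynomial.eval_eq_sum_range' (Nat.lt_succ_of_le hdeg)]
  apply IsUltrametricDist.norm_sum_le_of_forall_le_of_nonneg
    (pow_nonneg (by linarith) d)
  intro i hi
  rw [Finset.mem_range, Nat.lt_succ_iff] at hi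
  calc ‖p.coeff i * z ^ i‖ = ‖p.coeff i‖ * ‖z‖ ^ i := by rw [norm_mul, norm_pow]
    _ ≤ 1 * r ^ i := by
        apply mul_le_mul (hcoeff i) (pow_le_pow_left₀ (norm_nonneg z) hz i)
          (pow_nonneg (norm_nonneg z) i) zero_le_one
    _ = r ^ i := one_mul _
    _ ≤ r ^ d := pow_le_pow_right₀ hr hi

/-- Taylor estimate for polynomials over a non-Archimedean field:
If `f` has degree at most `d` with all coefficients of norm at most `1`, `1 ≤ r`,
`‖z‖ ≤ r` and `‖w‖ ≤ 1`, then `‖f(z+w) − f(z) − f′(z)·w‖ ≤ r^d · ‖w‖²`. -/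
theorem taylor_estimate_nonarch
    {K : Type*} [NormedField K] [IsUltrametricDist K]
    (d : ℕ) (hd : 1 ≤ d) (f : Polynomial K)
    (hdeg : f.natDegree ≤ d) (hcoeff : ∀ n : ℕ, ‖f.coeff n‖ ≤ 1)
    (r : ℝ) (hr : 1 ≤ r) (z w : K) (hz : ‖z‖ ≤ r) (hw : ‖w‖ ≤ 1) :
    ‖f.eval (z + w) - f.eval z - (derivative f).eval z * w‖ ≤ r ^ d * ‖w‖ ^ 2 := by
  set g := taylor z f with hg
  have hgd : g.natDegree ≤ d := by rw [hg, natDegree_taylor]; exact hdeg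
  have heval : f.eval (z + w) = g.eval w := by
    rw [hg, taylor_eval, add_comm]
  have key : f.eval (z + w) - f.eval z - (derivative f).eval z * w
      = ∑ i ∈ Finset.Ico 2 (d + 1), g.coeff i * w ^ i := by
    have h0 : f.eval z = g.coeff 0 := (taylor_coeff_zero z f).symm
    have h1 : (derivative f).eval z = g.coeff 1 := (taylor_coeff_one z f).symm
    have hsum : g.eval w = ∑ i ∈ Finset.range (d + 1), g.coeff i * w ^ i :=
      Polynomial.eval_eq_sum_range' (Nat.lt_succ_of_le hgd) w
    have hsplit : (∑ i ∈ Finset.Ico 0 2, g.coeff i * w ^ i)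
        + ∑ i ∈ Finset.Ico 2 (d + 1), g.coeff i * w ^ i
        = ∑ i ∈ Finset.Ico 0 (d + 1), g.coeff i * w ^ i :=
      Finset.sum_Ico_consecutive _ (Nat.zero_le 2) (by omega)
    have h2 : (∑ i ∈ Finset.Ico 0 2, g.coeff i * w ^ i)
        = g.coeff 0 + g.coeff 1 * w := by
      rw [show Finset.Ico 0 2 = {0, 1} by rfl]
      simp [Finset.sum_insert, pow_one]
    rw [heval, hsum, h0, h1, Finset.range_eq_Ico, ← hsplit, h2]
    ring
  rw [key]
  apply IsUltrametricDist.norm_sum_le_of_forall_le_of_nonneg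
    (mul_nonneg (pow_nonneg (by linarith) d) (pow_nonneg (norm_nonneg w) 2))
  intro i hi
  rw [Finset.mem_Ico] at hi
  have hc : ‖g.coeff i‖ ≤ r ^ d := by
    rw [hg, taylor_coeff]
    refine eval_norm_le_aux d _ ((natDegree_hasseDeriv_le f i).trans (by omega)) ?_ r hr z hz
    intro n
    rw [Polynomial.hasseDeriv_coeff]
    calc ‖((n + i).choose i : K) * f.coeff (n + i)‖
        = ‖(((n + i).choose i : ℕ) : K)‖ * ‖f.coeff (n + i)‖ := by push_cast; rw [norm_mul]
      _ ≤ 1 * 1 := mul_le_mul (IsUltrametricDist.norm_natCast_le_one K _)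
            (hcoeff _) (norm_nonneg _) zero_le_one
      _ = 1 := one_mul 1
  calc ‖g.coeff i * w ^ i‖ = ‖g.coeff i‖ * ‖w‖ ^ i := by rw [norm_mul, norm_pow]
    _ ≤ r ^ d * ‖w‖ ^ 2 := by
        apply mul_le_mul hc (pow_le_pow_of_le_one (norm_nonneg w) hw hi.1)
          (pow_nonneg (norm_nonneg w) i) (pow_nonneg (by linarith) d)
end

section
/- Let K be an algebraically closed field equipped with a non-Archimedean absolute value ‖·‖, let δ ≥ 1 be an integer with ‖(δ : K)‖ = 1, and let u ∈ K with ‖u − 1‖ < 1. Then there exists a unique γ ∈ K with γ^δ = u and ‖γ − 1‖ < 1; moreover this γ satisfies ‖γ − 1‖ = ‖u − 1‖. -/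
/-!
For `‖(δ : K)‖ = 1` the map `z ↦ z ^ δ` is an isometry of the open unit ball around `1`:
`x ^ δ - y ^ δ = (x - y) * ∑ i < δ, x ^ i * y ^ (δ - 1 - i)`, where each of the `δ` summands
lies within distance `< 1` of `1`, so the sum lies within `< 1` of `δ` and has norm `1`. This
gives both the norm identity (take `y = 1`) and uniqueness. For existence, `1 - u = ∏ (1 - r)`
over the roots `r` of `X ^ δ - u`, so `‖1 - u‖ < 1` forces `‖1 - r‖ < 1` for some root.
-/

open Polynomial Metric

theorem Polynomial.exists_mem_roots_norm_sub_lt_one {K : Type*} [NormedField K] {p : K[X]}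
    (hsplit : p.Splits) (hmonic : p.Monic) {x : K} (hx : ‖p.eval x‖ < 1) :
    ∃ r ∈ p.roots, ‖x - r‖ < 1 := by
  by_contra! h
  refine hx.not_ge ?_
  rw [hsplit.eval_eq_prod_roots_of_monic hmonic]
  change 1 ≤ (normHom : K →*₀ ℝ) _
  rw [← Multiset.prod_hom, Multiset.map_map]
  exact Multiset.one_le_prod_map h

namespace IsUltrametricDist

def ballOneSubmonoid (R : Type*) [SeminormedRing R] [NormOneClass R] [IsUltrametricDist R] :
    Submonoid R where
  carrier := ball 1 1
  one_mem' := mem_ball_self one_pos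
  mul_mem' {x y} hx hy := by
    rw [mem_ball, dist_eq_norm] at *
    have hx1 : ‖x‖ ≤ 1 := by
      simpa [max_eq_right hx.le] using norm_add_one_le_max_norm_one (x - 1)
    calc ‖x * y - 1‖ = ‖x * (y - 1) + (x - 1)‖ := by
          rw [mul_sub, mul_one, sub_add_sub_cancel]
      _ ≤ max ‖x * (y - 1)‖ ‖x - 1‖ := norm_add_le_max _ _
      _ < 1 := max_lt ((norm_mul_le _ _).trans_lt
          (mul_lt_one_of_nonneg_of_lt_one_right hx1 (norm_nonneg _) hy)) hx

theorem mem_ballOneSubmonoid {R : Type*} [SeminormedRing R] [NormOneClass R]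
    [IsUltrametricDist R] {x : R} : x ∈ ballOneSubmonoid R ↔ ‖x - 1‖ < 1 := by
  rw [← dist_eq_norm, ← mem_ball]
  rfl

theorem norm_pow_sub_pow_of_norm_sub_one_lt_one {K : Type*} [NormedField K] [IsUltrametricDist K]
    {n : ℕ} (hn : ‖(n : K)‖ = 1) {x y : K} (hx : ‖x - 1‖ < 1) (hy : ‖y - 1‖ < 1) :
    ‖x ^ n - y ^ n‖ = ‖x - y‖ := by
  set S := ∑ i ∈ Finset.range n, x ^ i * y ^ (n - 1 - i)
  have hS : ‖S - n‖ < 1 := by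
    have hsum : S - n = ∑ i ∈ Finset.range n, (x ^ i * y ^ (n - 1 - i) - 1) := by
      simp [S, Finset.sum_sub_distrib]
    rw [hsum, ← mem_ball_zero_iff]
    refine (ball_openAddSubgroup K one_pos).sum_mem fun i _ => mem_ball_zero_iff.2 ?_
    rw [← mem_ballOneSubmonoid] at hx hy ⊢
    exact mul_mem (pow_mem hx i) (pow_mem hy _)
  have hS1 : ‖S‖ = 1 := by
    rw [← hn] at hS ⊢
    simpa [max_eq_right hS.le] using norm_add_eq_max_of_norm_ne_norm hS.ne
  rw [← geom_sum₂_mul, norm_mul, hS1, one_mul]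

end IsUltrametricDist

theorem exists_unique_root_close_to_one_nonarch_general
    {K : Type*} [NormedField K] [IsUltrametricDist K] [IsAlgClosed K]
    (δ : ℕ) (hδnorm : ‖(δ : K)‖ = 1)
    (u : K) (hu : ‖u - 1‖ < 1) :
    ∃ γ : K, γ ^ δ = u ∧ ‖γ - 1‖ < 1 ∧ ‖γ - 1‖ = ‖u - 1‖ ∧
      ∀ γ' : K, γ' ^ δ = u → ‖γ' - 1‖ < 1 → γ' = γ := by
  have hδ : δ ≠ 0 := by
    rintro rfl
    simp at hδnorm
  obtain ⟨γ, hγ, hγ1⟩ := exists_mem_roots_norm_sub_lt_one (IsAlgClosed.splits (X ^ δ - C u))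
    (monic_X_pow_sub_C u hδ) (x := 1) (by simpa [norm_sub_rev] using hu)
  have hγu : γ ^ δ = u := by simpa [sub_eq_zero] using isRoot_of_mem_roots hγ
  rw [norm_sub_rev] at hγ1
  refine ⟨γ, hγu, hγ1, ?_, fun γ' hγ' hγ'1 => ?_⟩
  · simpa [hγu] using (IsUltrametricDist.norm_pow_sub_pow_of_norm_sub_one_lt_one hδnorm hγ1
      (y := 1) (by simp)).symm
  · have h := IsUltrametricDist.norm_pow_sub_pow_of_norm_sub_one_lt_one hδnorm hγ'1 hγ1
    rwa [hγ', hγu, sub_self, norm_zero, eq_comm, norm_eq_zero, sub_eq_zero] at h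

/-- In an algebraically closed non-Archimedean field, if `‖(δ : K)‖ = 1`
and `‖u − 1‖ < 1`, then there is a unique `γ` with `γ^δ = u` and `‖γ − 1‖ < 1`;
moreover `‖γ − 1‖ = ‖u − 1‖`. -/
theorem exists_unique_root_close_to_one_nonarch
    {K : Type*} [NormedField K] [IsUltrametricDist K] [IsAlgClosed K]
    (δ : ℕ) (hδ : 1 ≤ δ) (hδnorm : ‖(δ : K)‖ = 1)
    (u : K) (hu : ‖u - 1‖ < 1) :
    ∃ γ : K, γ ^ δ = u ∧ ‖γ - 1‖ < 1 ∧ ‖γ - 1‖ = ‖u - 1‖ ∧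
      ∀ γ' : K, γ' ^ δ = u → ‖γ' - 1‖ < 1 → γ' = γ :=
  exists_unique_root_close_to_one_nonarch_general δ hδnorm u hu
end

section
/- Let K be an algebraically closed field, complete with respect to a nontrivial non-Archimedean absolute value ‖·‖. Let Λ ⊆ K be an open ball and let h : Λ → K be given by a power series centered at the center of Λ converging at every point of Λ. If h(λ) ≠ 0 for all λ ∈ Λ, then ‖h(λ_1)‖ = ‖h(λ_2)‖ for all λ_1, λ_2 ∈ Λ, i.e. a nonvanishing analytic function on an open ball has constant absolute value. -/
/-!
After rescaling, the point `λ` becomes `1` and the ball becomes the closed unit ball, so it suffices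
to show that a series `g x = ∑ cₙ xⁿ` converging and nonvanishing on `‖x‖ ≤ 1` satisfies
`‖cₙ‖ < ‖c₀‖` for `n ≥ 1`; the ultrametric inequality then gives `‖g x‖ = ‖c₀‖`.

Otherwise let `N ≥ 1` be the last index at which `‖cₙ‖` is maximal. For every `a` in the ball, a
polynomial truncation `P` of `g` has a root `z` with `‖z - a‖ ^ N * ‖c_N‖ ≤ ‖g a‖`: the Taylor
coefficient of `P` at `a` in degree `N` still has norm `‖c_N‖`, and a smallest root `w` of a split
polynomial `Q` satisfies `‖w‖ ^ N * ‖Q_N‖ ≤ ‖Q_0‖`. Since `‖g z‖ = ‖g z - P z‖` is as small as we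
like, iterating `a ↦ z` gives a Cauchy sequence whose limit is a zero of `g`.
-/

open Polynomial Filter Topology Metric IsUltrametricDist

theorem exists_last_argmax_of_tendsto_zero {f : ℕ → ℝ} (hf : Tendsto f atTop (𝓝 0)) {i : ℕ}
    (hi : 0 < f i) : ∃ N, (∀ k, f k ≤ f N) ∧ ∀ k, N < k → f k < f N := by
  obtain ⟨M, hM⟩ := eventually_atTop.mp (hf.eventually (gt_mem_nhds hi))
  set S := Finset.range (max M (i + 1))
  have hiS : i ∈ S := Finset.mem_range.mpr (by omega)
  have hout : ∀ k ∉ S, f k < f i := fun k hk =>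
    hM k (by simp only [S, Finset.mem_range, not_lt] at hk; omega)
  -- maximise `f` over `S`, breaking ties in favour of the larger index
  obtain ⟨N, -, hN⟩ := S.exists_max_image (fun k => toLex (f k, k)) ⟨i, hiS⟩
  have hfN : ∀ k ∈ S, f k < f N ∨ f k = f N ∧ k ≤ N := fun k hk =>
    Prod.Lex.toLex_le_toLex.mp (hN k hk)
  have hiN : f i ≤ f N := by rcases hfN i hiS with h | ⟨h, -⟩ <;> linarith
  refine ⟨N, fun k => ?_, fun k hk => ?_⟩
  · by_cases hk : k ∈ S
    · rcases hfN k hk with h | ⟨h, -⟩ <;> linarith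
    · linarith [hout k hk]
  · by_cases hkS : k ∈ S
    · rcases hfN k hkS with h | h
      · exact h
      · omega
    · linarith [hout k hkS]

theorem exists_mem_eq_zero_of_forall_exists_dist_pow_le {X E : Type*} [PseudoMetricSpace X]
    [CompleteSpace X] [NormedAddGroup E] {S : Set X} (hS : IsClosed S) {g : X → E}
    (hg : ContinuousOn g S) {N : ℕ} (hN : N ≠ 0) {C : ℝ} (hC : 0 ≤ C)
    (hstep : ∀ a ∈ S, ∃ z ∈ S, dist z a ^ N ≤ C * ‖g a‖ ∧ ‖g z‖ ≤ ‖g a‖ / 2 ^ N)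
    {a : X} (ha : a ∈ S) : ∃ x ∈ S, g x = 0 := by
  choose! F hFS hF using hstep
  set u : ℕ → X := fun k => F^[k] a
  have hu_succ : ∀ k, u (k + 1) = F (u k) := fun k => Function.iterate_succ_apply' F k a
  have huS : ∀ k, u k ∈ S := fun k => by
    induction k with
    | zero => exact ha
    | succ k ih => rw [hu_succ]; exact hFS _ ih
  have hgu : ∀ k, ‖g (u k)‖ ≤ ‖g a‖ / (2 ^ N) ^ k := fun k => by
    induction k with
    | zero => simp [u]
    | succ k ih =>
      rw [hu_succ, pow_succ, ← div_div]
      exact (hF _ (huS k)).2.trans (by gcongr)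
  -- `D ≥ 1` lets us take `N`-th roots without `rpow`: `D ≤ D ^ N`
  set D := max 1 (C * ‖g a‖)
  have hdist : ∀ k, dist (u k) (u (k + 1)) ≤ D * (1 / 2) ^ k := fun k => by
    refine (pow_le_pow_iff_left₀ dist_nonneg (by positivity) hN).mp ?_
    calc dist (u k) (u (k + 1)) ^ N ≤ C * ‖g (u k)‖ := by
          rw [dist_comm, hu_succ]; exact (hF _ (huS k)).1
      _ ≤ C * ‖g a‖ / (2 ^ N) ^ k := by rw [mul_div_assoc]; gcongr; exact hgu k
      _ ≤ D ^ N / (2 ^ N) ^ k := by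
          gcongr; exact (le_max_right _ _).trans (le_self_pow₀ (le_max_left _ _) hN)
      _ = (D * (1 / 2) ^ k) ^ N := by
          rw [mul_pow, ← pow_mul, ← pow_mul, mul_comm k N, pow_mul, pow_mul, div_eq_mul_inv,
            one_div, inv_pow, inv_pow]
  obtain ⟨x, hx⟩ :=
    cauchySeq_tendsto_of_complete (cauchySeq_of_le_geometric _ D (by norm_num) hdist)
  have hxS : x ∈ S := hS.mem_of_tendsto hx (Eventually.of_forall huS)
  have hlim : Tendsto (fun k => ‖g (u k)‖) atTop (𝓝 ‖g x‖) :=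
    ((hg x hxS).tendsto.comp (tendsto_nhdsWithin_iff.mpr ⟨hx, Eventually.of_forall huS⟩)).norm
  have hzero : Tendsto (fun k => ‖g (u k)‖) atTop (𝓝 0) := by
    refine squeeze_zero (fun _ => norm_nonneg _) hgu ?_
    simpa [div_eq_mul_inv, inv_pow] using (tendsto_pow_atTop_nhds_zero_of_lt_one (by positivity)
      (inv_lt_one_of_one_lt₀ (one_lt_pow₀ one_lt_two hN))).const_mul ‖g a‖
  exact ⟨x, hxS, norm_eq_zero.mp (tendsto_nhds_unique hlim hzero)⟩

section Polynomial

variable {K : Type*} [NormedField K] [IsUltrametricDist K]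

theorem norm_coeff_prod_X_sub_C_mul_pow_le {s : Multiset K} {β : ℝ} (hβ : 0 ≤ β)
    (hs : ∀ w ∈ s, β ≤ ‖w‖) (k : ℕ) :
    ‖(s.map (X - C ·)).prod.coeff k‖ * β ^ k ≤ ‖(s.map (X - C ·)).prod.coeff 0‖ := by
  induction s using Multiset.induction_on generalizing k with
  | empty => rcases k with _ | k <;> simp [coeff_one]
  | cons a s ih =>
    have ha : β ≤ ‖a‖ := hs a (Multiset.mem_cons_self a s)
    replace ih := ih fun w hw => hs w (Multiset.mem_cons_of_mem hw)
    set R := (s.map (X - C ·)).prod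
    rw [Multiset.map_cons, Multiset.prod_cons]
    rcases k with _ | k
    · simp
    have h0 : ((X - C a) * R).coeff 0 = -(a * R.coeff 0) := by simp [sub_mul]
    rw [coeff_X_sub_C_mul, h0, norm_neg, norm_mul, sub_eq_add_neg]
    calc ‖R.coeff k + -(a * R.coeff (k + 1))‖ * β ^ (k + 1)
        ≤ max ‖R.coeff k‖ ‖-(a * R.coeff (k + 1))‖ * β ^ (k + 1) := by
          gcongr; exact norm_add_le_max _ _
      _ = max (‖R.coeff k‖ * β ^ k * β) (‖R.coeff (k + 1)‖ * β ^ (k + 1) * ‖a‖) := by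
          rw [max_mul_of_nonneg _ _ (by positivity), norm_neg, norm_mul, pow_succ]
          congr 1 <;> ring
      _ ≤ ‖a‖ * ‖R.coeff 0‖ := by
          rw [mul_comm ‖a‖]
          exact max_le (mul_le_mul (ih k) ha hβ (norm_nonneg _))
            (mul_le_mul_of_nonneg_right (ih (k + 1)) (norm_nonneg _))

theorem Polynomial.Splits.exists_isRoot_norm_pow_mul_le {Q : K[X]} (hQ : Q.Splits) {k : ℕ}
    (hk : k ≠ 0) (hQk : Q.coeff k ≠ 0) :
    ∃ w, Q.IsRoot w ∧ ‖w‖ ^ k * ‖Q.coeff k‖ ≤ ‖Q.coeff 0‖ := by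
  classical
  have hroots : Q.roots.toFinset.Nonempty := by
    rw [Multiset.toFinset_nonempty, ← Multiset.card_pos, splits_iff_card_roots.mp hQ]
    exact lt_of_lt_of_le (Nat.pos_of_ne_zero hk) (le_natDegree_of_ne_zero hQk)
  obtain ⟨w, hw, hmin⟩ := Q.roots.toFinset.exists_min_image (‖·‖) hroots
  rw [Multiset.mem_toFinset] at hw
  refine ⟨w, isRoot_of_mem_roots hw, ?_⟩
  have hbound := norm_coeff_prod_X_sub_C_mul_pow_le (norm_nonneg w)
    (fun v hv => hmin v (Multiset.mem_toFinset.mpr hv)) k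
  rw [hQ.eq_prod_roots, coeff_C_mul, coeff_C_mul, norm_mul, norm_mul, mul_left_comm]
  exact mul_le_mul_of_nonneg_left (by rwa [mul_comm]) (norm_nonneg _)

theorem norm_taylor_coeff_eq {P : K[X]} {N : ℕ} (hlt : ∀ k, N < k → ‖P.coeff k‖ < ‖P.coeff N‖)
    {a : K} (ha : ‖a‖ ≤ 1) : ‖(taylor a P).coeff N‖ = ‖P.coeff N‖ := by
  set E := hasseDeriv N P
  have hE0 : E.coeff 0 = P.coeff N := by simp [E, hasseDeriv_coeff]
  have hterm : ∀ i, ‖E.coeff (i + 1) * a ^ (i + 1)‖ < ‖P.coeff N‖ := fun i => by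
    rw [hasseDeriv_coeff, norm_mul, norm_mul, norm_pow]
    calc ‖((i + 1 + N).choose N : K)‖ * ‖P.coeff (i + 1 + N)‖ * ‖a‖ ^ (i + 1)
        ≤ 1 * ‖P.coeff (i + 1 + N)‖ * 1 := by
          gcongr
          · exact norm_natCast_le_one K _
          · exact pow_le_one₀ (norm_nonneg a) ha
      _ < ‖P.coeff N‖ := by rw [one_mul, mul_one]; exact hlt _ (by omega)
  obtain ⟨i, -, hi⟩ := exists_norm_finsetSum_le (Finset.range E.natDegree)
    fun i => E.coeff (i + 1) * a ^ (i + 1)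
  have hsum := hi.trans_lt (hterm i)
  rw [taylor_coeff, eval_eq_sum_range, Finset.sum_range_succ', pow_zero, mul_one, hE0,
    norm_add_eq_max_of_norm_ne_norm hsum.ne, max_eq_right hsum.le]

theorem exists_isRoot_norm_sub_pow_mul_le [IsAlgClosed K] {P : K[X]} {N : ℕ} (hN : N ≠ 0)
    (hlt : ∀ k, N < k → ‖P.coeff k‖ < ‖P.coeff N‖) {a : K} (ha : ‖a‖ ≤ 1) :
    ∃ z, P.IsRoot z ∧ ‖z - a‖ ^ N * ‖P.coeff N‖ ≤ ‖P.eval a‖ := by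
  have hPN : P.coeff N ≠ 0 :=
    norm_pos_iff.mp ((norm_nonneg _).trans_lt (hlt (N + 1) N.lt_succ_self))
  have hQN := norm_taylor_coeff_eq hlt ha
  obtain ⟨w, hw, hwle⟩ := (IsAlgClosed.splits (taylor a P)).exists_isRoot_norm_pow_mul_le hN
    (norm_ne_zero_iff.mp (hQN ▸ norm_ne_zero_iff.mpr hPN))
  refine ⟨w + a, by simpa [IsRoot, taylor_eval] using hw, ?_⟩
  rwa [add_sub_cancel_right, ← hQN, ← taylor_coeff_zero]

end Polynomial

theorem IsUltrametricDist.norm_hasSum_eq_of_norm_lt {E : Type*} [NormedAddCommGroup E]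
    [IsUltrametricDist E] {f : ℕ → E} {s : E} (hs : HasSum f s)
    (hf : ∀ n, n ≠ 0 → ‖f n‖ < ‖f 0‖) : ‖s‖ = ‖f 0‖ := by
  have htail : HasSum (fun n => f (n + 1)) (s - f 0) := by
    simpa using (hasSum_nat_add_iff' 1).mpr hs
  have hlt : ‖s - f 0‖ < ‖f 0‖ := by
    by_cases hpos : ∃ n, 0 < ‖f (n + 1)‖
    · obtain ⟨n, hn⟩ := hpos
      obtain ⟨M, hM, -⟩ := exists_last_argmax_of_tendsto_zero
        (tendsto_norm_zero.comp htail.summable.tendsto_atTop_zero) hn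
      rw [← htail.tsum_eq]
      exact (norm_tsum_le_of_forall_le_of_nonneg (norm_nonneg _) hM).trans_lt
        (hf _ M.succ_ne_zero)
    · simp only [not_exists, not_lt, norm_le_zero_iff] at hpos
      have : s - f 0 = 0 := htail.unique (by simp [hpos])
      rw [this, norm_zero]
      exact (norm_nonneg _).trans_lt (hf 1 one_ne_zero)
  rw [← sub_add_cancel s (f 0), add_comm, norm_add_eq_max_of_norm_ne_norm hlt.ne',
    max_eq_left hlt.le]

section PowerSeries

variable {K : Type*} [NormedField K] [IsUltrametricDist K] {c : ℕ → K} {g : K → K}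

theorem norm_pow_sub_pow_le {x y : K} (hx : ‖x‖ ≤ 1) (hy : ‖y‖ ≤ 1) (n : ℕ) :
    ‖x ^ n - y ^ n‖ ≤ ‖x - y‖ := by
  induction n with
  | zero => simp
  | succ n ih =>
    rw [show x ^ (n + 1) - y ^ (n + 1) = x ^ n * (x - y) + y * (x ^ n - y ^ n) by ring]
    refine (norm_add_le_max _ _).trans (max_le ?_ ?_) <;> rw [norm_mul]
    · rw [norm_pow]
      exact mul_le_of_le_one_left (norm_nonneg _) (pow_le_one₀ (norm_nonneg x) hx)
    · exact (mul_le_of_le_one_left (norm_nonneg _) hy).trans ih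

theorem apply_zero_eq_of_hasSum (hc : ∀ x : K, ‖x‖ ≤ 1 → HasSum (fun n => c n * x ^ n) (g x)) :
    g 0 = c 0 := by
  have h0 : HasSum (fun n => c n * (0 : K) ^ n) (c 0) := by
    simpa using hasSum_single (f := fun n => c n * (0 : K) ^ n) 0 fun n hn => by simp [hn]
  exact (hc 0 (by simp)).unique h0

theorem tendsto_coeff_zero_of_hasSum
    (hc : ∀ x : K, ‖x‖ ≤ 1 → HasSum (fun n => c n * x ^ n) (g x)) :
    Tendsto c atTop (𝓝 0) := by
  simpa using (hc 1 (by simp)).summable.tendsto_atTop_zero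

theorem norm_sub_sum_range_le_of_hasSum_s16
    (hc : ∀ x : K, ‖x‖ ≤ 1 → HasSum (fun n => c n * x ^ n) (g x)) {m : ℕ} {ε : ℝ} (hε : 0 ≤ ε)
    (hcε : ∀ n, m ≤ n → ‖c n‖ ≤ ε) {x : K} (hx : ‖x‖ ≤ 1) :
    ‖g x - ∑ i ∈ Finset.range m, c i * x ^ i‖ ≤ ε := by
  rw [← ((hasSum_nat_add_iff' m).mpr (hc x hx)).tsum_eq]
  refine norm_tsum_le_of_forall_le_of_nonneg hε fun n => ?_
  rw [norm_mul, norm_pow]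
  exact (mul_le_of_le_one_right (norm_nonneg _) (pow_le_one₀ (norm_nonneg x) hx)).trans
    (hcε _ (by omega))

theorem lipschitzOnWith_of_hasSum
    (hc : ∀ x : K, ‖x‖ ≤ 1 → HasSum (fun n => c n * x ^ n) (g x)) {C : NNReal}
    (hC : ∀ n, ‖c n‖ ≤ C) : LipschitzOnWith C g (closedBall 0 1) := by
  refine LipschitzOnWith.of_dist_le_mul fun x hx y hy => ?_
  rw [mem_closedBall_zero_iff] at hx hy
  rw [dist_eq_norm, dist_eq_norm, ← ((hc x hx).sub (hc y hy)).tsum_eq]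
  refine norm_tsum_le_of_forall_le_of_nonneg (by positivity) fun n => ?_
  rw [← mul_sub, norm_mul]
  exact mul_le_mul (hC n) (norm_pow_sub_pow_le hx hy n) (norm_nonneg _) C.coe_nonneg

theorem exists_norm_le_one_norm_sub_pow_mul_le_of_hasSum [IsAlgClosed K]
    (hc : ∀ x : K, ‖x‖ ≤ 1 → HasSum (fun n => c n * x ^ n) (g x)) {N : ℕ} (hN : N ≠ 0)
    (hmax : ∀ k, ‖c k‖ ≤ ‖c N‖) (hlt : ∀ k, N < k → ‖c k‖ < ‖c N‖) {a : K} (ha : ‖a‖ ≤ 1) :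
    ∃ z, ‖z‖ ≤ 1 ∧ ‖z - a‖ ^ N * ‖c N‖ ≤ ‖g a‖ ∧ ‖g z‖ ≤ ‖g a‖ / 2 ^ N := by
  rcases eq_or_ne (g a) 0 with hga | hga
  · exact ⟨a, ha, by simp [hN, hga], by simp [hga]⟩
  set δ := ‖g a‖ / 2 ^ N
  have hδ : 0 < δ := by have := norm_pos_iff.mpr hga; positivity
  obtain ⟨m, hm⟩ := eventually_atTop.mp
    ((tendsto_norm_zero.comp (tendsto_coeff_zero_of_hasSum hc)).eventually (gt_mem_nhds hδ))
  set P := PowerSeries.trunc (max m (N + 1)) (PowerSeries.mk c)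
  have hP : ∀ k, P.coeff k = if k < max m (N + 1) then c k else 0 := by
    simp [P, PowerSeries.coeff_trunc]
  have htail : ∀ x : K, ‖x‖ ≤ 1 → ‖g x - P.eval x‖ ≤ δ := fun x hx => by
    simpa [P, ← eval₂_id, PowerSeries.eval₂_trunc_eq_sum_range] using
      norm_sub_sum_range_le_of_hasSum_s16 hc hδ.le (fun n hn => (hm n (le_of_max_le_left hn)).le) hx
  have hPN : P.coeff N = c N := by rw [hP, if_pos (by omega)]
  have hPlt : ∀ k, N < k → ‖P.coeff k‖ < ‖P.coeff N‖ := fun k hk => by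
    rw [hPN, hP]
    split_ifs
    · exact hlt k hk
    · exact norm_zero (E := K) ▸ (norm_nonneg _).trans_lt (hlt _ hk)
  obtain ⟨z, hz, hzP⟩ := exists_isRoot_norm_sub_pow_mul_le hN hPlt ha
  have hPa : ‖P.eval a‖ ≤ ‖g a‖ := by
    have hδa : δ ≤ ‖g a‖ := div_le_self (norm_nonneg _) (one_le_pow₀ one_le_two)
    rw [show P.eval a = g a + -(g a - P.eval a) by ring]
    refine (norm_add_le_max _ _).trans (max_le le_rfl ?_)
    rw [norm_neg]
    exact (htail a ha).trans hδa
  have hza : ‖z - a‖ ^ N * ‖c N‖ ≤ ‖g a‖ := hPN ▸ hzP.trans hPa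
  have hza1 : ‖z - a‖ ≤ 1 := by
    have hgN : ‖g a‖ ≤ ‖c N‖ := by
      simpa using
        norm_sub_sum_range_le_of_hasSum_s16 hc (m := 0) (norm_nonneg _) (fun n _ => hmax n) ha
    have hcN : 0 < ‖c N‖ := (norm_nonneg _).trans_lt (hlt _ N.lt_succ_self)
    refine (pow_le_one_iff_of_nonneg (norm_nonneg _) hN).mp ?_
    exact le_of_mul_le_mul_right (by rw [one_mul]; exact hza.trans hgN) hcN
  have hz1 : ‖z‖ ≤ 1 := by
    rw [← sub_add_cancel z a]
    exact (norm_add_le_max _ _).trans (max_le hza1 ha)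
  refine ⟨z, hz1, hza, ?_⟩
  simpa [hz.eq_zero] using htail z hz1

theorem norm_coeff_lt_norm_coeff_zero_of_hasSum [CompleteSpace K] [IsAlgClosed K]
    (hc : ∀ x : K, ‖x‖ ≤ 1 → HasSum (fun n => c n * x ^ n) (g x))
    (hg : ∀ x : K, ‖x‖ ≤ 1 → g x ≠ 0) {j : ℕ} (hj : j ≠ 0) : ‖c j‖ < ‖c 0‖ := by
  by_contra! hj0
  have hc0 : 0 < ‖c 0‖ := by
    rw [← apply_zero_eq_of_hasSum hc]; exact norm_pos_iff.mpr (hg 0 (by simp))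
  obtain ⟨N, hmax, hlt⟩ := exists_last_argmax_of_tendsto_zero
    (tendsto_norm_zero.comp (tendsto_coeff_zero_of_hasSum hc)) hc0
  have hN : N ≠ 0 := by
    rintro rfl
    exact (hlt j (Nat.pos_of_ne_zero hj)).not_ge hj0
  have hcN : 0 < ‖c N‖ := hc0.trans_le (hmax 0)
  obtain ⟨x, hx, hgx⟩ := exists_mem_eq_zero_of_forall_exists_dist_pow_le isClosed_closedBall
    (lipschitzOnWith_of_hasSum hc (C := ‖c N‖₊) hmax).continuousOn hN (inv_nonneg.mpr hcN.le)
    (fun a ha => by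
      obtain ⟨z, hz, hza, hgz⟩ := exists_norm_le_one_norm_sub_pow_mul_le_of_hasSum hc hN hmax hlt
        (mem_closedBall_zero_iff.mp ha)
      refine ⟨z, mem_closedBall_zero_iff.mpr hz, ?_, hgz⟩
      rwa [dist_eq_norm, le_inv_mul_iff₀ hcN, mul_comm])
    (mem_closedBall_self zero_le_one)
  exact hg x (mem_closedBall_zero_iff.mp hx) hgx

theorem norm_eq_norm_coeff_zero_of_hasSum [CompleteSpace K] [IsAlgClosed K]
    (hc : ∀ x : K, ‖x‖ ≤ 1 → HasSum (fun n => c n * x ^ n) (g x))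
    (hg : ∀ x : K, ‖x‖ ≤ 1 → g x ≠ 0) {x : K} (hx : ‖x‖ ≤ 1) : ‖g x‖ = ‖c 0‖ := by
  simpa using norm_hasSum_eq_of_norm_lt (hc x hx) fun n hn => by
    rw [norm_mul, norm_pow, pow_zero, mul_one]
    exact (mul_le_of_le_one_right (norm_nonneg _) (pow_le_one₀ (norm_nonneg _) hx)).trans_lt
      (norm_coeff_lt_norm_coeff_zero_of_hasSum hc hg hn)

end PowerSeries

theorem nonvanishing_constant_norm_ball_general
    {K : Type*} [NontriviallyNormedField K] [IsUltrametricDist K]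
    [CompleteSpace K] [IsAlgClosed K]
    (lam0 : K) (ρ : ℝ) (h : K → K) (b : ℕ → K)
    (hps : ∀ lam : K, ‖lam - lam0‖ < ρ →
      HasSum (fun n : ℕ => b n * (lam - lam0) ^ n) (h lam))
    (hnz : ∀ lam : K, ‖lam - lam0‖ < ρ → h lam ≠ 0) :
    ∀ lam1 : K, ‖lam1 - lam0‖ < ρ → ∀ lam2 : K, ‖lam2 - lam0‖ < ρ →
      ‖h lam1‖ = ‖h lam2‖ := by
  suffices key : ∀ lam, ‖lam - lam0‖ < ρ → ‖h lam‖ = ‖b 0‖ from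
    fun lam1 h1 lam2 h2 => (key lam1 h1).trans (key lam2 h2).symm
  intro lam hlam
  have hball : ∀ x : K, ‖x‖ ≤ 1 → ‖lam0 + (lam - lam0) * x - lam0‖ < ρ := fun x hx => by
    rw [add_sub_cancel_left, norm_mul]
    exact (mul_le_of_le_one_right (norm_nonneg _) hx).trans_lt hlam
  have hc : ∀ x : K, ‖x‖ ≤ 1 → HasSum (fun n => b n * (lam - lam0) ^ n * x ^ n)
      (h (lam0 + (lam - lam0) * x)) := fun x hx => by
    simpa [mul_pow, mul_assoc] using hps _ (hball x hx)
  simpa using norm_eq_norm_coeff_zero_of_hasSum hc (fun x hx => hnz _ (hball x hx))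
    (x := 1) norm_one.le

/-- a nonvanishing analytic function (given by a convergent power series)
on an open ball over a complete algebraically closed non-Archimedean field has constant
absolute value. -/
theorem nonvanishing_constant_norm_ball
    {K : Type*} [NontriviallyNormedField K] [IsUltrametricDist K]
    [CompleteSpace K] [IsAlgClosed K]
    (lam0 : K) (ρ : ℝ) (hρ : 0 < ρ) (h : K → K) (b : ℕ → K)
    (hps : ∀ lam : K, ‖lam - lam0‖ < ρ →
      HasSum (fun n : ℕ => b n * (lam - lam0) ^ n) (h lam))
    (hnz : ∀ lam : K, ‖lam - lam0‖ < ρ → h lam ≠ 0) :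
    ∀ lam1 : K, ‖lam1 - lam0‖ < ρ → ∀ lam2 : K, ‖lam2 - lam0‖ < ρ →
      ‖h lam1‖ = ‖h lam2‖ :=
  nonvanishing_constant_norm_ball_general lam0 ρ h b hps hnz
end

section
/- Let K be a field equipped with a non-Archimedean absolute value ‖·‖, and let f(z) = z^d + a_{d−2}z^{d−2} + ⋯ + a_0 ∈ K[z] be monic centered of degree d ≥ 2 with ‖(d : K)‖ = 1. Let R ≥ 1 be a real number with ‖a_i‖ ≤ R^{d−i} for all 0 ≤ i ≤ d−2 (so R ≥ R_f). Suppose φ, ψ : {z ∈ K : ‖z‖ > R} → K both satisfy, for all z with ‖z‖ > R: φ(f(z)) = φ(z)^d and ‖φ(z) − z‖ < ‖z‖ (and likewise for ψ), and both satisfy the normalization ‖φ(z) − z‖/‖z‖ → 0 and ‖ψ(z) − z‖/‖z‖ → 0 as ‖z‖ → ∞. Then φ(z) = ψ(z) for all z with ‖z‖ > R. (Uniqueness of the normalized Böttcher coordinate, on classical points.) -/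
open Polynomial Filter Topology

/-- `phi` is a normalized Böttcher coordinate of `f` (of degree `d`) on `{‖z‖ > R}`:
it semiconjugates `f` to `z ↦ z^d`, is `‖·‖`-close to the identity there, and is
asymptotic to the identity at infinity. -/
def IsBoettcher {K : Type*} [NormedField K] (f : K → K) (d : ℕ) (R : ℝ) (phi : K → K) :
    Prop :=
  (∀ z : K, R < ‖z‖ → phi (f z) = (phi z) ^ d) ∧
  (∀ z : K, R < ‖z‖ → ‖phi z - z‖ < ‖z‖) ∧
  Tendsto (fun z : K => ‖phi z - z‖ / ‖z‖) (comap (fun z : K => ‖z‖) atTop) (nhds 0)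

/-! For `‖z‖ > R`, the ratio `ε(z) = ‖φ z - ψ z‖ / ‖z‖` is invariant under `f`: `φ z` and `ψ z`
both have norm `‖z‖` and are closer to each other than that, so by tameness (`‖d‖ = 1`) the
ultrametric estimate `‖x ^ d - y ^ d‖ = ‖x - y‖ * ‖y‖ ^ (d - 1)` applies, while `‖f z‖ = ‖z‖ ^ d`.
The orbit of `z` escapes to infinity, where `ε` tends to `0` by the normalization, so `ε(z) = 0`. -/

namespace IsUltrametricDist

section AddGroup

variable {M : Type*} [SeminormedAddCommGroup M] [IsUltrametricDist M]

theorem norm_add_eq_left {x y : M} (h : ‖y‖ < ‖x‖) : ‖x + y‖ = ‖x‖ := by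
  rw [norm_add_eq_max_of_norm_ne_norm h.ne', max_eq_left h.le]

theorem norm_eq_of_norm_sub_lt {x y : M} (h : ‖x - y‖ < ‖y‖) : ‖x‖ = ‖y‖ := by
  rw [← add_sub_cancel y x, norm_add_eq_left h]

theorem norm_sum_lt_of_forall_lt {ι : Type*} {s : Finset ι} {f : ι → M} {C : ℝ} (hC : 0 < C)
    (h : ∀ i ∈ s, ‖f i‖ < C) : ‖∑ i ∈ s, f i‖ < C := by
  rcases s.eq_empty_or_nonempty with rfl | hs
  · simpa using hC
  · obtain ⟨i, hi, hle⟩ := exists_norm_finsetSum_le_of_nonempty hs f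
    exact hle.trans_lt (h i hi)

end AddGroup

section Field

variable {K : Type*} [NormedField K] [IsUltrametricDist K]

theorem norm_pow_sub_one_le {u : K} (hu : ‖u‖ ≤ 1) (k : ℕ) : ‖u ^ k - 1‖ ≤ ‖u - 1‖ := by
  induction k with
  | zero => simp
  | succ k ih =>
    rw [show u ^ (k + 1) - 1 = u ^ k * (u - 1) + (u ^ k - 1) by ring]
    refine (norm_add_le_max _ _).trans (max_le ?_ ih)
    rw [norm_mul, norm_pow]
    exact mul_le_of_le_one_left (norm_nonneg _) (pow_le_one₀ (norm_nonneg _) hu)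

theorem norm_geom_sum_eq_one {d : ℕ} (hd : ‖(d : K)‖ = 1) {u : K} (hu : ‖u - 1‖ < 1) :
    ‖∑ i ∈ Finset.range d, u ^ i‖ = 1 := by
  have hu1 : ‖u‖ ≤ 1 := ((norm_eq_of_norm_sub_lt (hu.trans_eq norm_one.symm)).trans norm_one).le
  have hdev : ‖∑ i ∈ Finset.range d, (u ^ i - 1)‖ < ‖(d : K)‖ := by
    rw [hd]
    exact (norm_sum_le_of_forall_le_of_nonneg (norm_nonneg _)
      fun i _ => norm_pow_sub_one_le hu1 i).trans_lt hu
  have hsplit : ∑ i ∈ Finset.range d, u ^ i = d + ∑ i ∈ Finset.range d, (u ^ i - 1) := by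
    simp [Finset.sum_sub_distrib]
  rw [hsplit, norm_add_eq_left hdev, hd]

theorem norm_pow_sub_pow {d : ℕ} (hd : ‖(d : K)‖ = 1) {x y : K} (h : ‖x - y‖ < ‖y‖) :
    ‖x ^ d - y ^ d‖ = ‖x - y‖ * ‖y‖ ^ (d - 1) := by
  have hy : y ≠ 0 := norm_pos_iff.mp ((norm_nonneg _).trans_lt h)
  have hd0 : d ≠ 0 := by rintro rfl; simp at hd
  set u := x / y
  have hxu : x = u * y := (div_mul_cancel₀ x hy).symm
  have hu : ‖u - 1‖ = ‖x - y‖ / ‖y‖ := by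
    rw [← norm_div, sub_div, div_self hy]
  have hfactor : x ^ d - y ^ d = (∑ i ∈ Finset.range d, u ^ i) * (u - 1) * y ^ d := by
    rw [geom_sum_mul, hxu, mul_pow]; ring
  have hu1 : ‖u - 1‖ < 1 := by rw [hu]; exact (div_lt_one (norm_pos_iff.mpr hy)).mpr h
  rw [hfactor, norm_mul, norm_mul, norm_geom_sum_eq_one hd hu1, hu, norm_pow,
    ← pow_sub_one_mul hd0]
  field_simp

end Field

end IsUltrametricDist

open IsUltrametricDist

theorem eval_MCpoly {K : Type*} [Field K] {d : ℕ} (a : Fin (d - 1) → K) (z : K) :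
    (MCpoly d a).eval z = z ^ d + ∑ i : Fin (d - 1), a i * z ^ (i : ℕ) := by
  simp [MCpoly, eval_finsetSum]

theorem norm_eval_MCpoly_s18 {K : Type*} [NormedField K] [IsUltrametricDist K] {d : ℕ}
    {a : Fin (d - 1) → K} {R : ℝ} (hR : 0 ≤ R)
    (hcoeff : ∀ i : Fin (d - 1), ‖a i‖ ≤ R ^ (d - (i : ℕ))) {z : K} (hz : R < ‖z‖) :
    ‖(MCpoly d a).eval z‖ = ‖z‖ ^ d := by
  have hz0 : 0 < ‖z‖ := hR.trans_lt hz
  have hterm : ∀ i : Fin (d - 1), ‖a i * z ^ (i : ℕ)‖ < ‖z‖ ^ d := fun i => by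
    have hi : (i : ℕ) < d := by have := i.isLt; omega
    calc ‖a i * z ^ (i : ℕ)‖ ≤ R ^ (d - (i : ℕ)) * ‖z‖ ^ (i : ℕ) := by
          rw [norm_mul, norm_pow]; gcongr; exact hcoeff i
      _ < ‖z‖ ^ (d - (i : ℕ)) * ‖z‖ ^ (i : ℕ) := by
          gcongr; exact Nat.sub_ne_zero_of_lt hi
      _ = ‖z‖ ^ d := pow_sub_mul_pow _ hi.le
  have hsum : ‖∑ i : Fin (d - 1), a i * z ^ (i : ℕ)‖ < ‖z ^ d‖ := by
    rw [norm_pow]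
    exact norm_sum_lt_of_forall_lt (by positivity) fun i _ => hterm i
  rw [eval_MCpoly, norm_add_eq_left hsum, norm_pow]

section Orbit

variable {E : Type*} [SeminormedAddGroup E] {f : E → E} {d : ℕ} {R : ℝ}

theorem norm_iterate_eq_pow (hf : ∀ w, R < ‖w‖ → ‖f w‖ = ‖w‖ ^ d) (hd : d ≠ 0) {z : E}
    (hz : R < ‖z‖) (hz1 : 1 ≤ ‖z‖) (n : ℕ) : ‖f^[n] z‖ = ‖z‖ ^ d ^ n := by
  induction n with
  | zero => simp
  | succ n ih =>
    have hR : R < ‖f^[n] z‖ := ih ▸ hz.trans_le (le_self_pow₀ hz1 (pow_ne_zero n hd))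
    rw [Function.iterate_succ_apply', hf _ hR, ih, ← pow_mul, ← pow_succ]

theorem lt_norm_iterate (hf : ∀ w, R < ‖w‖ → ‖f w‖ = ‖w‖ ^ d) (hd : d ≠ 0) {z : E}
    (hz : R < ‖z‖) (hz1 : 1 ≤ ‖z‖) (n : ℕ) : R < ‖f^[n] z‖ := by
  rw [norm_iterate_eq_pow hf hd hz hz1]
  exact hz.trans_le (le_self_pow₀ hz1 (pow_ne_zero n hd))

theorem tendsto_iterate_comap_norm_atTop (hf : ∀ w, R < ‖w‖ → ‖f w‖ = ‖w‖ ^ d) (hd : 2 ≤ d)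
    {z : E} (hz : R < ‖z‖) (hz1 : 1 < ‖z‖) :
    Tendsto (fun n => f^[n] z) atTop (comap (fun w : E => ‖w‖) atTop) := by
  rw [tendsto_comap_iff, Function.comp_def]
  simp_rw [norm_iterate_eq_pow hf (by omega) hz hz1.le]
  exact (tendsto_pow_atTop_atTop_of_one_lt hz1).comp
    (tendsto_pow_atTop_atTop_of_one_lt (by omega))

end Orbit

namespace IsBoettcher

variable {K : Type*} [NormedField K] {f : K → K} {d : ℕ} {R : ℝ} {φ ψ : K → K}

theorem tendsto_norm_sub_div_norm (hφ : IsBoettcher f d R φ) (hψ : IsBoettcher f d R ψ) :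
    Tendsto (fun z => ‖φ z - ψ z‖ / ‖z‖) (comap (fun z : K => ‖z‖) atTop) (𝓝 0) := by
  have hsum := hφ.2.2.add hψ.2.2
  rw [add_zero] at hsum
  refine squeeze_zero (fun z => by positivity) (fun z => ?_) hsum
  rw [← add_div]
  gcongr
  simpa [norm_sub_rev z] using norm_sub_le_norm_sub_add_norm_sub (φ z) z (ψ z)

variable [IsUltrametricDist K]

theorem norm_sub_lt (hφ : IsBoettcher f d R φ) (hψ : IsBoettcher f d R ψ) {z : K}
    (hz : R < ‖z‖) : ‖φ z - ψ z‖ < ‖ψ z‖ := by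
  rw [norm_eq_of_norm_sub_lt (hψ.2.1 z hz), ← sub_sub_sub_cancel_right _ _ z, sub_eq_add_neg]
  refine (norm_add_le_max _ _).trans_lt (max_lt (hφ.2.1 z hz) ?_)
  rw [norm_neg]
  exact hψ.2.1 z hz

theorem norm_sub_div_norm_apply (hdnorm : ‖(d : K)‖ = 1)
    (hf : ∀ w, R < ‖w‖ → ‖f w‖ = ‖w‖ ^ d) (hφ : IsBoettcher f d R φ)
    (hψ : IsBoettcher f d R ψ) {z : K} (hz : R < ‖z‖) :
    ‖φ (f z) - ψ (f z)‖ / ‖f z‖ = ‖φ z - ψ z‖ / ‖z‖ := by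
  have hd0 : d ≠ 0 := by rintro rfl; simp at hdnorm
  have hz0 : ‖z‖ ≠ 0 := ((norm_nonneg _).trans_lt (hψ.2.1 z hz)).ne'
  rw [hφ.1 z hz, hψ.1 z hz, norm_pow_sub_pow hdnorm (hφ.norm_sub_lt hψ hz),
    norm_eq_of_norm_sub_lt (hψ.2.1 z hz), hf z hz, ← mul_pow_sub_one hd0,
    mul_div_mul_right _ _ (pow_ne_zero _ hz0)]

end IsBoettcher

/-- uniqueness (on classical points) of the normalized Böttcher
coordinate of a monic centered tame polynomial on `{‖z‖ > R}` for `R ≥ R_f`. -/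
theorem boettcher_unique
    {K : Type*} [NormedField K] [IsUltrametricDist K]
    (d : ℕ) (hd : 2 ≤ d) (hdnorm : ‖(d : K)‖ = 1)
    (a : Fin (d - 1) → K) (R : ℝ) (hR : 1 ≤ R)
    (hcoeff : ∀ i : Fin (d - 1), ‖a i‖ ≤ R ^ (d - (i : ℕ)))
    (φ ψ : K → K)
    (hφ : IsBoettcher (fun z => (MCpoly d a).eval z) d R φ)
    (hψ : IsBoettcher (fun z => (MCpoly d a).eval z) d R ψ) :
    ∀ z : K, R < ‖z‖ → φ z = ψ z := by
  intro z hz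
  set f : K → K := fun z => (MCpoly d a).eval z
  have hf : ∀ w, R < ‖w‖ → ‖f w‖ = ‖w‖ ^ d := fun w hw =>
    norm_eval_MCpoly_s18 (zero_le_one.trans hR) hcoeff hw
  have hz1 : 1 < ‖z‖ := hR.trans_lt hz
  have hconst : ∀ n, ‖φ (f^[n] z) - ψ (f^[n] z)‖ / ‖f^[n] z‖ = ‖φ z - ψ z‖ / ‖z‖ := by
    intro n
    induction n with
    | zero => rfl
    | succ n ih =>
      rw [Function.iterate_succ_apply', hφ.norm_sub_div_norm_apply hdnorm hf hψ
        (lt_norm_iterate hf (by omega) hz hz1.le n), ih]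
  have hlim := (hφ.tendsto_norm_sub_div_norm hψ).comp
    (tendsto_iterate_comap_norm_atTop hf hd hz hz1)
  simp only [Function.comp_def, hconst] at hlim
  have hzero := tendsto_nhds_unique tendsto_const_nhds hlim
  rwa [div_eq_zero_iff, or_iff_left (zero_lt_one.trans hz1).ne', norm_eq_zero, sub_eq_zero] at hzero
end
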